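/- Fix real numbers 1 < α < β. (a) There is a unique generalized 4-system R = (R_1,…,R_4) on [3+α, α(3+α)] with R_1 = R_2 whose values at its division numbers are A_1 = (1,1,1,α), A_2 = (1,1,α,α), A_3 = (1,1,α,α²) and αA_1 = (α,α,α,α²) (it is the piecewise affine map taking these values at q = 3+α, 2+2α, 2+α+α², 3α+α² respectively), and R extends uniquely to a self-similar proper generalized 4-system on [3+α,∞) with R(αq) = αR(q) for all q ≥ 3+α; for this R, K(R) is the convex hull of {Ā_1, Ā_2, Ā_3} and is contained in the face x_1 = x_2 of Δ̄. (b) Similarly, there is a unique generalized 4-system S = (S_1,…,S_4) on [1+3β, β(1+3β)] with S_3 = S_4 whose values at its division numbers are B_1 = (1,β,β,β), B_2 = (1,β,β²,β²), B_3 = (β,β,β²,β²) and βB_1 = (β,β²,β²,β²), extending uniquely to a self-similar proper generalized 4-system on [1+3β,∞) with S(βq) = βS(q); for this S, K(S) is the convex hull of {B̄_1, B̄_2, B̄_3} and is contained in the face x_3 = x_4 of Δ̄. -/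

import Mathlib

open Set Filter

noncomputable section

/-- `f` is, on `H`, convex and piecewise linear with slopes `0` then `1`. -/
def SlopeZeroOneOn (H : Set ℝ) (f : ℝ → ℝ) : Prop :=
  ∃ c v : ℝ, ∀ t ∈ H, f t = v + max (t - c) 0

/-- A generalized `n`-system on `I`: a continuous piecewise linear map
satisfying (G1), (G2) and (G3). -/
def IsGenNSystem (n : ℕ) (I : Set ℝ) (P : ℝ → Fin n → ℝ) : Prop :=
  ContinuousOn P I ∧
  (∀ q ∈ I, ∃ ε > 0, ∃ a b c d : Fin n → ℝ,
    (∀ t ∈ I ∩ Icc (q - ε) q, ∀ i, P t i = a i * t + b i) ∧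
    (∀ t ∈ I ∩ Icc q (q + ε), ∀ i, P t i = c i * t + d i)) ∧
  (∀ q ∈ I, (∀ i, 0 ≤ P q i) ∧ Monotone (P q) ∧ (∑ i, P q i) = q) ∧
  (∀ i : Fin n, MonotoneOn (fun q => P q i) I ∧ LipschitzOnWith 1 (fun q => P q i) I) ∧
  (∀ j : ℕ, ∀ hj : j + 1 < n, ∀ H : Set ℝ, H ⊆ I → H.OrdConnected →
    (∀ q ∈ H, P q ⟨j, Nat.lt_of_succ_lt hj⟩ < P q ⟨j + 1, hj⟩) →
    SlopeZeroOneOn H fun q => ∑ i : Fin n, if (i : ℕ) ≤ j then P q i else 0)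

/-- `P` is proper: its first coordinate (equivalently, by (S1)/(G1), each of its
coordinates) tends to infinity with `q`. -/
def IsProper (n : ℕ) (P : ℝ → Fin n → ℝ) : Prop :=
  ∀ i : Fin n, Tendsto (fun q => P q i) atTop atTop

/-- `F(P)`: the set of accumulation points of `q⁻¹ P(q)` as `q → ∞`. -/
def accPts (n : ℕ) (P : ℝ → Fin n → ℝ) : Set (Fin n → ℝ) :=
  {x | MapClusterPt x atTop fun q : ℝ => q⁻¹ • P q}

/-- `K(P)`: the convex hull of `F(P)`. -/
def Kset (n : ℕ) (P : ℝ → Fin n → ℝ) : Set (Fin n → ℝ) :=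
  convexHull ℝ (accPts n P)

def ptA1 (α : ℝ) : Fin 4 → ℝ := ![1, 1, 1, α]
def ptA2 (α : ℝ) : Fin 4 → ℝ := ![1, 1, α, α]
def ptA3 (α : ℝ) : Fin 4 → ℝ := ![1, 1, α, α ^ 2]
def ptB1 (β : ℝ) : Fin 4 → ℝ := ![1, β, β, β]
noncomputable def ptE3 : Fin 4 → ℝ := ![0, 0, 1/2, 1/2]

/-- `Ā₁ = A₁/|A₁|`, where `|X|` is the sum of the coordinates of `X`. -/
noncomputable def nA1 (α : ℝ) : Fin 4 → ℝ := (3 + α)⁻¹ • ptA1 α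
noncomputable def nA2 (α : ℝ) : Fin 4 → ℝ := (2 + 2 * α)⁻¹ • ptA2 α
noncomputable def nA3 (α : ℝ) : Fin 4 → ℝ := (2 + α + α ^ 2)⁻¹ • ptA3 α
noncomputable def nB1 (β : ℝ) : Fin 4 → ℝ := (1 + 3 * β)⁻¹ • ptB1 β

/-- The convex hull `K` of `{B̄₁, Ā₁, Ā₂, Ā₃, E₃}`. -/
noncomputable def Kbig (α β : ℝ) : Set (Fin 4 → ℝ) :=
  convexHull ℝ {nB1 β, nA1 α, nA2 α, nA3 α, ptE3}

/-- The simplex `Δ̄ = {x ∈ ℝ⁴ : 0 ≤ x₁ ≤ x₂ ≤ x₃ ≤ x₄, x₁+x₂+x₃+x₄ = 1}`. -/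
def stdDelta : Set (Fin 4 → ℝ) :=
  {x | 0 ≤ x 0 ∧ x 0 ≤ x 1 ∧ x 1 ≤ x 2 ∧ x 2 ≤ x 3 ∧ x 0 + x 1 + x 2 + x 3 = 1}

def ptB2 (β : ℝ) : Fin 4 → ℝ := ![1, β, β ^ 2, β ^ 2]
def ptB3 (β : ℝ) : Fin 4 → ℝ := ![β, β, β ^ 2, β ^ 2]
noncomputable def nB2 (β : ℝ) : Fin 4 → ℝ := (1 + β + 2 * β ^ 2)⁻¹ • ptB2 β
noncomputable def nB3 (β : ℝ) : Fin 4 → ℝ := (2 * β + 2 * β ^ 2)⁻¹ • ptB3 β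

/-- The defining conditions for `R` on `[3+α, α(3+α)]`: a generalized
`4`-system with `R₁ = R₂` whose division numbers are exactly
`3+α, 2+2α, 2+α+α², α(3+α)` (the two interior ones being its points of
non-differentiability), with division points `A₁, A₂, A₃, αA₁` there. -/
def RCond (α : ℝ) (R : ℝ → Fin 4 → ℝ) : Prop :=
  IsGenNSystem 4 (Icc (3 + α) (α * (3 + α))) R ∧
  (∀ q ∈ Icc (3 + α) (α * (3 + α)), R q 0 = R q 1) ∧
  {q ∈ Ioo (3 + α) (α * (3 + α)) | ¬DifferentiableAt ℝ R q} =
    {2 + 2 * α, 2 + α + α ^ 2} ∧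
  R (3 + α) = ptA1 α ∧ R (2 + 2 * α) = ptA2 α ∧ R (2 + α + α ^ 2) = ptA3 α ∧
  R (α * (3 + α)) = α • ptA1 α

/-- The analogous conditions for `S` on `[1+3β, β(1+3β)]`, with `S₃ = S₄` and
division points `B₁, B₂, B₃, βB₁`. -/
def SCond (β : ℝ) (S : ℝ → Fin 4 → ℝ) : Prop :=
  IsGenNSystem 4 (Icc (1 + 3 * β) (β * (1 + 3 * β))) S ∧
  (∀ q ∈ Icc (1 + 3 * β) (β * (1 + 3 * β)), S q 2 = S q 3) ∧
  {q ∈ Ioo (1 + 3 * β) (β * (1 + 3 * β)) | ¬DifferentiableAt ℝ S q} =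
    {1 + β + 2 * β ^ 2, 2 * β + 2 * β ^ 2} ∧
  S (1 + 3 * β) = ptB1 β ∧ S (1 + β + 2 * β ^ 2) = ptB2 β ∧
  S (2 * β + 2 * β ^ 2) = ptB3 β ∧ S (β * (1 + 3 * β)) = β • ptB1 β

open Topology

namespace GS4

def ramp (a b q : ℝ) : ℝ := min (max q a) b - a

lemma ramp_of_le {a b q : ℝ} (hab : a ≤ b) (h : q ≤ a) : ramp a b q = 0 := by
  simp [ramp, max_eq_right h, min_eq_left hab]

lemma ramp_of_mem {a b q : ℝ} (h1 : a ≤ q) (h2 : q ≤ b) : ramp a b q = q - a := by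
  simp [ramp, max_eq_left h1, min_eq_left h2]

lemma ramp_of_ge {a b q : ℝ} (hab : a ≤ b) (h : b ≤ q) : ramp a b q = b - a := by
  simp [ramp, max_eq_left (hab.trans h), min_eq_right h]

lemma ramp_mono (a b : ℝ) : Monotone (ramp a b) :=
  fun _ _ h => sub_le_sub_right (min_le_min (max_le_max h le_rfl) le_rfl) a

lemma ramp_nonneg {a b : ℝ} (hab : a ≤ b) (q : ℝ) : 0 ≤ ramp a b q :=
  sub_nonneg.2 (le_min (le_max_right q a) hab)

lemma ramp_le {a b : ℝ} (q : ℝ) : ramp a b q ≤ b - a :=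
  sub_le_sub_right (min_le_right _ _) a

lemma ramp_continuous (a b : ℝ) : Continuous (ramp a b) := by
  unfold ramp; fun_prop

lemma mono4 {f : Fin 4 → ℝ} (h01 : f 0 ≤ f 1) (h12 : f 1 ≤ f 2) (h23 : f 2 ≤ f 3) :
    Monotone f := by
  intro i j hij
  fin_cases i <;> fin_cases j <;>
    simp_all [Fin.le_def] <;> first | linarith | omega

lemma interp_mono {u v su sv t Δ : ℝ} (hΔ : 0 < Δ) (h0 : u ≤ v)
    (h1 : u + Δ * su ≤ v + Δ * sv) (ht0 : 0 ≤ t) (ht1 : t ≤ Δ) :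
    u + t * su ≤ v + t * sv := by
  nlinarith [mul_nonneg (sub_nonneg.2 ht1) (sub_nonneg.2 h0),
    mul_nonneg ht0 (by linarith : (0:ℝ) ≤ v + Δ * sv - (u + Δ * su))]

structure SD where
  γ : ℝ
  q0 : ℝ
  q1 : ℝ
  q2 : ℝ
  q3 : ℝ
  V0 : Fin 4 → ℝ
  s1 : Fin 4 → ℝ
  s2 : Fin 4 → ℝ
  s3 : Fin 4 → ℝ
  hγ : 1 < γ
  hq0 : 0 < q0
  h01 : q0 < q1
  h12 : q1 < q2
  h23 : q2 < q3
  hq3 : q3 = γ * q0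
  hs1 : ∀ i, 0 ≤ s1 i
  hs2 : ∀ i, 0 ≤ s2 i
  hs3 : ∀ i, 0 ≤ s3 i
  hsum1 : s1 0 + s1 1 + s1 2 + s1 3 = 1
  hsum2 : s2 0 + s2 1 + s2 2 + s2 3 = 1
  hsum3 : s3 0 + s3 1 + s3 2 + s3 3 = 1
  hV0sum : V0 0 + V0 1 + V0 2 + V0 3 = q0
  hV0pos : 0 < V0 0
  hm0 : Monotone V0
  hm1 : Monotone fun i => V0 i + (q1 - q0) * s1 i
  hm2 : Monotone fun i => (V0 i + (q1 - q0) * s1 i) + (q2 - q1) * s2 i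
  hsim : ∀ i, ((V0 i + (q1 - q0) * s1 i) + (q2 - q1) * s2 i) + (q3 - q2) * s3 i = γ * V0 i

namespace SD

variable (D : SD)

def V1 : Fin 4 → ℝ := fun i => D.V0 i + (D.q1 - D.q0) * D.s1 i
def V2 : Fin 4 → ℝ := fun i => D.V1 i + (D.q2 - D.q1) * D.s2 i
def V3 : Fin 4 → ℝ := fun i => D.V2 i + (D.q3 - D.q2) * D.s3 i

lemma γpos : 0 < D.γ := lt_trans one_pos D.hγ
lemma h02 : D.q0 < D.q2 := D.h01.trans D.h12
lemma h03 : D.q0 < D.q3 := D.h02.trans D.h23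
lemma h13 : D.q1 < D.q3 := D.h12.trans D.h23
lemma hq1pos : 0 < D.q1 := D.hq0.trans D.h01
lemma hq2pos : 0 < D.q2 := D.hq0.trans D.h02
lemma hq3pos : 0 < D.q3 := D.hq0.trans D.h03

lemma V3_eq : ∀ i, D.V3 i = D.γ * D.V0 i := by
  intro i; have := D.hsim i; simpa [V3, V2, V1] using this

lemma V0pos : ∀ i, 0 < D.V0 i := fun i => lt_of_lt_of_le D.hV0pos (D.hm0 (Fin.zero_le i))

lemma mV1 : Monotone D.V1 := D.hm1
lemma mV2 : Monotone D.V2 := D.hm2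
lemma mV3 : Monotone D.V3 := by
  intro i j h
  rw [D.V3_eq i, D.V3_eq j]
  exact mul_le_mul_of_nonneg_left (D.hm0 h) D.γpos.le

def base (q : ℝ) : Fin 4 → ℝ := fun i =>
  D.V0 i + D.s1 i * ramp D.q0 D.q1 q + D.s2 i * ramp D.q1 D.q2 q + D.s3 i * ramp D.q2 D.q3 q

lemma base_of_le {q : ℝ} (h : q ≤ D.q0) : D.base q = D.V0 := by
  funext i
  simp [base, ramp_of_le D.h01.le h, ramp_of_le D.h12.le (h.trans D.h01.le),
    ramp_of_le D.h23.le (h.trans D.h02.le)]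

lemma base_piece1 {q : ℝ} (h1 : D.q0 ≤ q) (h2 : q ≤ D.q1) (i : Fin 4) :
    D.base q i = D.V0 i + (q - D.q0) * D.s1 i := by
  simp [base, ramp_of_mem h1 h2, ramp_of_le D.h12.le h2, ramp_of_le D.h23.le (h2.trans D.h12.le)]
  ring

lemma base_piece2 {q : ℝ} (h1 : D.q1 ≤ q) (h2 : q ≤ D.q2) (i : Fin 4) :
    D.base q i = D.V1 i + (q - D.q1) * D.s2 i := by
  simp [base, V1, ramp_of_ge D.h01.le h1, ramp_of_mem h1 h2, ramp_of_le D.h23.le h2]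
  ring

lemma base_piece3 {q : ℝ} (h1 : D.q2 ≤ q) (h2 : q ≤ D.q3) (i : Fin 4) :
    D.base q i = D.V2 i + (q - D.q2) * D.s3 i := by
  simp [base, V2, V1, ramp_of_ge D.h01.le (D.h12.le.trans h1), ramp_of_ge D.h12.le h1,
    ramp_of_mem h1 h2]
  ring

lemma base_of_ge {q : ℝ} (h : D.q3 ≤ q) : D.base q = D.V3 := by
  funext i
  simp [base, V3, V2, V1, ramp_of_ge D.h01.le (D.h12.le.trans (D.h23.le.trans h)),
    ramp_of_ge D.h12.le (D.h23.le.trans h), ramp_of_ge D.h23.le h]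
  ring

lemma base_q0 : D.base D.q0 = D.V0 := D.base_of_le le_rfl
lemma base_q1 : D.base D.q1 = D.V1 := by
  funext i; rw [D.base_piece1 D.h01.le le_rfl i]; simp [V1]
lemma base_q2 : D.base D.q2 = D.V2 := by
  funext i; rw [D.base_piece2 D.h12.le le_rfl i]; simp [V2]
lemma base_q3 : D.base D.q3 = D.V3 := D.base_of_ge le_rfl

lemma base_mono_q (i : Fin 4) : Monotone fun q => D.base q i := by
  intro x y h
  simp only [base]
  gcongr
  · exact D.hs1 i
  · exact ramp_mono _ _ h
  · exact D.hs2 i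
  · exact ramp_mono _ _ h
  · exact D.hs3 i
  · exact ramp_mono _ _ h

lemma base_continuous : Continuous D.base := by
  apply continuous_pi
  intro i
  unfold base ramp
  fun_prop

lemma base_pos (q : ℝ) (i : Fin 4) : 0 < D.base q i := by
  have h1 := mul_nonneg (D.hs1 i) (ramp_nonneg D.h01.le q)
  have h2 := mul_nonneg (D.hs2 i) (ramp_nonneg D.h12.le q)
  have h3 := mul_nonneg (D.hs3 i) (ramp_nonneg D.h23.le q)
  have := D.V0pos i
  simp only [base]
  linarith

lemma ramp_chain {q : ℝ} (h1 : D.q0 ≤ q) (h2 : q ≤ D.q3) :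
    ramp D.q0 D.q1 q + ramp D.q1 D.q2 q + ramp D.q2 D.q3 q = q - D.q0 := by
  rcases le_or_gt q D.q1 with h | h
  · rw [ramp_of_mem h1 h, ramp_of_le D.h12.le h, ramp_of_le D.h23.le (h.trans D.h12.le)]; ring
  rcases le_or_gt q D.q2 with h' | h'
  · rw [ramp_of_ge D.h01.le h.le, ramp_of_mem h.le h', ramp_of_le D.h23.le h']; ring
  · rw [ramp_of_ge D.h01.le (D.h12.le.trans h'.le), ramp_of_ge D.h12.le h'.le,
      ramp_of_mem h'.le h2]; ring

lemma base_sum {q : ℝ} (h1 : D.q0 ≤ q) (h2 : q ≤ D.q3) :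
    D.base q 0 + D.base q 1 + D.base q 2 + D.base q 3 = q := by
  have hc := D.ramp_chain h1 h2
  simp only [base]
  linear_combination D.hV0sum + ramp D.q0 D.q1 q * D.hsum1 + ramp D.q1 D.q2 q * D.hsum2 +
    ramp D.q2 D.q3 q * D.hsum3 + hc

lemma base_sorted {q : ℝ} (h1 : D.q0 ≤ q) (h2 : q ≤ D.q3) : Monotone (D.base q) := by
  have key : ∀ i j : Fin 4, i ≤ j → D.base q i ≤ D.base q j := by
    intro i j hij
    rcases le_or_gt q D.q1 with h | h
    · rw [D.base_piece1 h1 h i, D.base_piece1 h1 h j]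
      exact interp_mono (Δ := D.q1 - D.q0) (by linarith [D.h01]) (D.hm0 hij)
        (D.hm1 hij) (by linarith) (by linarith)
    rcases le_or_gt q D.q2 with h' | h'
    · rw [D.base_piece2 h.le h' i, D.base_piece2 h.le h' j]
      exact interp_mono (Δ := D.q2 - D.q1) (by linarith [D.h12]) (D.mV1 hij)
        (D.hm2 hij) (by linarith) (by linarith)
    · rw [D.base_piece3 h'.le h2 i, D.base_piece3 h'.le h2 j]
      refine interp_mono (Δ := D.q3 - D.q2) (by linarith [D.h23]) (D.mV2 hij) ?_
        (by linarith) (by linarith)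
      have h3 := D.mV3 hij
      simp only [V3] at h3
      exact h3
  exact fun i j h => key i j h

end SD
end GS4

namespace GS4
namespace SD
variable (D : SD)

def nIdx (q : ℝ) : ℕ := (⌊Real.logb D.γ (q / D.q0)⌋).toNat

lemma pow_q3 (m : ℕ) : D.γ ^ m * D.q3 = D.γ ^ (m + 1) * D.q0 := by
  rw [D.hq3, pow_succ]; ring

lemma nIdx_spec {q : ℝ} (h : D.q0 ≤ q) :
    D.γ ^ D.nIdx q * D.q0 ≤ q ∧ q < D.γ ^ (D.nIdx q + 1) * D.q0 := by
  have hγ := D.hγ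
  have hq0 := D.hq0
  have hx : (1:ℝ) ≤ q / D.q0 := (one_le_div hq0).2 h
  have hxpos : 0 < q / D.q0 := lt_of_lt_of_le one_pos hx
  set L := Real.logb D.γ (q / D.q0) with hL
  have hlog : 0 ≤ L := Real.logb_nonneg hγ hx
  have hfl : 0 ≤ ⌊L⌋ := Int.floor_nonneg.2 hlog
  have hn : ((D.nIdx q : ℕ) : ℝ) = ((⌊L⌋ : ℤ) : ℝ) := by
    simp only [nIdx, ← hL]
    exact_mod_cast congrArg (fun z : ℤ => (z : ℝ)) (Int.toNat_of_nonneg hfl)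
  have hrl : D.γ ^ L = q / D.q0 := Real.rpow_logb D.γpos (by linarith) hxpos
  constructor
  · have h1 : ((D.nIdx q : ℕ) : ℝ) ≤ L := by rw [hn]; exact Int.floor_le L
    have h2 : D.γ ^ ((D.nIdx q : ℕ) : ℝ) ≤ D.γ ^ L := by
      exact (Real.rpow_le_rpow_left_iff hγ).2 h1
    rw [hrl, Real.rpow_natCast] at h2
    calc D.γ ^ D.nIdx q * D.q0 ≤ (q / D.q0) * D.q0 :=
          mul_le_mul_of_nonneg_right h2 hq0.le
      _ = q := by field_simp
  · have h1 : L < ((D.nIdx q : ℕ) : ℝ) + 1 := by rw [hn]; exact Int.lt_floor_add_one L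
    have h2 : D.γ ^ L < D.γ ^ (((D.nIdx q : ℕ) : ℝ) + 1) := by
      exact (Real.rpow_lt_rpow_left_iff hγ).2 h1
    rw [hrl] at h2
    have h3 : D.γ ^ (((D.nIdx q : ℕ) : ℝ) + 1) = D.γ ^ (D.nIdx q + 1) := by
      rw [show (((D.nIdx q : ℕ) : ℝ) + 1) = ((D.nIdx q + 1 : ℕ) : ℝ) by push_cast; ring,
        Real.rpow_natCast]
    rw [h3] at h2
    calc q = (q / D.q0) * D.q0 := by field_simp
      _ < D.γ ^ (D.nIdx q + 1) * D.q0 := mul_lt_mul_of_pos_right h2 hq0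

lemma pow_pos' (m : ℕ) : (0:ℝ) < D.γ ^ m := pow_pos D.γpos m

lemma one_le_pow (m : ℕ) : (1:ℝ) ≤ D.γ ^ m := one_le_pow₀ D.hγ.le

lemma nIdx_eq {m : ℕ} {q : ℝ} (h1 : D.γ ^ m * D.q0 ≤ q) (h2 : q < D.γ ^ (m + 1) * D.q0) :
    D.nIdx q = m := by
  have hq : D.q0 ≤ q := by
    calc D.q0 = 1 * D.q0 := (one_mul _).symm
      _ ≤ D.γ ^ m * D.q0 := mul_le_mul_of_nonneg_right (D.one_le_pow m) D.hq0.le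
      _ ≤ q := h1
  obtain ⟨s1, s2⟩ := D.nIdx_spec hq
  have hlt1 : D.γ ^ D.nIdx q < D.γ ^ (m + 1) :=
    lt_of_mul_lt_mul_right (lt_of_le_of_lt s1 h2) D.hq0.le
  have hlt2 : D.γ ^ m < D.γ ^ (D.nIdx q + 1) :=
    lt_of_mul_lt_mul_right (lt_of_le_of_lt h1 s2) D.hq0.le
  have e1 : D.nIdx q < m + 1 := (pow_lt_pow_iff_right₀ D.hγ).1 hlt1
  have e2 : m < D.nIdx q + 1 := (pow_lt_pow_iff_right₀ D.hγ).1 hlt2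
  omega

def Ext (q : ℝ) : Fin 4 → ℝ := (D.γ ^ D.nIdx q) • D.base (q / D.γ ^ D.nIdx q)

lemma ext_window {m : ℕ} {q : ℝ} (h1 : D.γ ^ m * D.q0 ≤ q) (h2 : q ≤ D.γ ^ m * D.q3) :
    D.Ext q = (D.γ ^ m) • D.base (q / D.γ ^ m) := by
  rcases lt_or_eq_of_le h2 with h | h
  · rw [D.pow_q3] at h
    rw [Ext, D.nIdx_eq h1 h]
  · have hq3' : q = D.γ ^ (m + 1) * D.q0 := by rw [h, D.pow_q3]
    have hn : D.nIdx q = m + 1 := by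
      apply D.nIdx_eq (le_of_eq hq3'.symm)
      rw [hq3']
      have : D.γ ^ (m+1) < D.γ ^ (m+2) := pow_lt_pow_right₀ D.hγ (by omega)
      exact mul_lt_mul_of_pos_right this D.hq0
    rw [Ext, hn]
    have e1 : q / D.γ ^ (m+1) = D.q0 := by
      rw [hq3', mul_comm, mul_div_assoc, div_self (ne_of_gt (D.pow_pos' (m+1))), mul_one]
    have e2 : q / D.γ ^ m = D.q3 := by
      rw [h, mul_comm, mul_div_assoc, div_self (ne_of_gt (D.pow_pos' m)), mul_one]
    rw [e1, e2, D.base_q0, D.base_q3]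
    funext i
    simp only [Pi.smul_apply, smul_eq_mul, D.V3_eq i, pow_succ]
    ring

lemma ext_eq_base {q : ℝ} (h1 : D.q0 ≤ q) (h2 : q ≤ D.q3) : D.Ext q = D.base q := by
  have := D.ext_window (m := 0) (q := q) (by rw [pow_zero, one_mul]; exact h1)
    (by rw [pow_zero, one_mul]; exact h2)
  rw [pow_zero, one_smul, div_one] at this
  exact this

lemma exists_window {q : ℝ} (h : D.q0 ≤ q) :
    D.γ ^ D.nIdx q * D.q0 ≤ q ∧ q ≤ D.γ ^ D.nIdx q * D.q3 := by
  obtain ⟨s1, s2⟩ := D.nIdx_spec h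
  exact ⟨s1, by rw [D.pow_q3]; exact s2.le⟩

lemma u_mem {q : ℝ} {m : ℕ} (h1 : D.γ ^ m * D.q0 ≤ q) (h2 : q ≤ D.γ ^ m * D.q3) :
    D.q0 ≤ q / D.γ ^ m ∧ q / D.γ ^ m ≤ D.q3 := by
  constructor
  · rw [le_div_iff₀ (D.pow_pos' m)]; linarith [h1]
  · rw [div_le_iff₀ (D.pow_pos' m)]; linarith [h2]

lemma ext_junction (m : ℕ) : D.Ext (D.γ ^ m * D.q0) = (D.γ ^ m) • D.V0 := by
  have h1 : D.γ ^ m * D.q0 ≤ D.γ ^ m * D.q0 := le_rfl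
  have h2 : D.γ ^ m * D.q0 ≤ D.γ ^ m * D.q3 :=
    mul_le_mul_of_nonneg_left D.h03.le (D.pow_pos' m).le
  rw [D.ext_window h1 h2]
  congr 1
  rw [mul_comm, mul_div_assoc, div_self (ne_of_gt (D.pow_pos' m)), mul_one]
  exact D.base_q0

lemma ext_sum {q : ℝ} (h : D.q0 ≤ q) :
    D.Ext q 0 + D.Ext q 1 + D.Ext q 2 + D.Ext q 3 = q := by
  obtain ⟨h1, h2⟩ := D.exists_window h
  rw [D.ext_window h1 h2]
  obtain ⟨u1, u2⟩ := D.u_mem h1 h2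
  have := D.base_sum u1 u2
  simp only [Pi.smul_apply, smul_eq_mul]
  have hg := D.pow_pos' (D.nIdx q)
  have hu : q / D.γ ^ D.nIdx q * D.γ ^ D.nIdx q = q := div_mul_cancel₀ q (ne_of_gt hg)
  linear_combination (D.γ ^ D.nIdx q) * this + hu

lemma ext_sorted {q : ℝ} (h : D.q0 ≤ q) : Monotone (D.Ext q) := by
  obtain ⟨h1, h2⟩ := D.exists_window h
  rw [D.ext_window h1 h2]
  obtain ⟨u1, u2⟩ := D.u_mem h1 h2
  intro i j hij
  simp only [Pi.smul_apply, smul_eq_mul]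
  exact mul_le_mul_of_nonneg_left (D.base_sorted u1 u2 hij) (D.pow_pos' _).le

lemma ext_pos {q : ℝ} (h : D.q0 ≤ q) (i : Fin 4) : 0 < D.Ext q i := by
  obtain ⟨h1, h2⟩ := D.exists_window h
  rw [D.ext_window h1 h2]
  exact mul_pos (D.pow_pos' _) (D.base_pos _ i)

lemma nIdx_mono {q q' : ℝ} (hq : D.q0 ≤ q) (hle : q ≤ q') : D.nIdx q ≤ D.nIdx q' := by
  have hqp : 0 < q := lt_of_lt_of_le D.hq0 hq
  have h1 : (0:ℝ) < q / D.q0 := div_pos hqp D.hq0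
  have h2 : (0:ℝ) < q' / D.q0 := div_pos (lt_of_lt_of_le hqp hle) D.hq0
  have : Real.logb D.γ (q / D.q0) ≤ Real.logb D.γ (q' / D.q0) := by
    apply (Real.logb_le_logb D.hγ h1 h2).2
    exact div_le_div_of_nonneg_right hle D.hq0.le
  exact Int.toNat_le_toNat (Int.floor_le_floor this)

lemma ext_monoOn (i : Fin 4) : MonotoneOn (fun q => D.Ext q i) (Ici D.q0) := by
  intro q hq q' hq' hle
  simp only
  have hq0q : D.q0 ≤ q := hq
  have hq0q' : D.q0 ≤ q' := hq'
  obtain ⟨w1, w2⟩ := D.exists_window hq0q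
  obtain ⟨w1', w2'⟩ := D.exists_window hq0q'
  set m := D.nIdx q
  set m' := D.nIdx q'
  have hmm : m ≤ m' := D.nIdx_mono hq0q hle
  rcases eq_or_lt_of_le hmm with he | hlt
  · rw [D.ext_window w1 w2, D.ext_window (he ▸ w1') (he ▸ w2')]
    simp only [Pi.smul_apply, smul_eq_mul]
    apply mul_le_mul_of_nonneg_left _ (D.pow_pos' m).le
    apply D.base_mono_q i
    exact div_le_div_of_nonneg_right hle (D.pow_pos' m).le
  · -- chain through junctions
    rw [D.ext_window w1 w2, D.ext_window w1' w2']
    simp only [Pi.smul_apply, smul_eq_mul]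
    obtain ⟨u1, u2⟩ := D.u_mem w1 w2
    obtain ⟨u1', u2'⟩ := D.u_mem w1' w2'
    have b1 : D.base (q / D.γ ^ m) i ≤ D.γ * D.V0 i := by
      rw [← D.V3_eq i, ← D.base_q3]
      exact D.base_mono_q i u2
    have b2 : D.V0 i ≤ D.base (q' / D.γ ^ m') i := by
      rw [← D.base_q0]
      exact D.base_mono_q i u1'
    have hV := (D.V0pos i).le
    calc D.γ ^ m * D.base (q / D.γ ^ m) i ≤ D.γ ^ m * (D.γ * D.V0 i) :=
          mul_le_mul_of_nonneg_left b1 (D.pow_pos' m).le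
      _ = D.γ ^ (m+1) * D.V0 i := by rw [pow_succ]; ring
      _ ≤ D.γ ^ m' * D.V0 i := by
          apply mul_le_mul_of_nonneg_right _ hV
          exact pow_le_pow_right₀ D.hγ.le (by omega)
      _ ≤ D.γ ^ m' * D.base (q' / D.γ ^ m') i :=
          mul_le_mul_of_nonneg_left b2 (D.pow_pos' m').le

lemma ext_lipschitz (i : Fin 4) : LipschitzOnWith 1 (fun q => D.Ext q i) (Ici D.q0) := by
  have key : ∀ a ∈ Ici D.q0, ∀ b ∈ Ici D.q0, b ≤ a →
      D.Ext a i - D.Ext b i ≤ a - b ∧ 0 ≤ D.Ext a i - D.Ext b i := by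
    intro a ha b hb hba
    have mono := fun j => D.ext_monoOn j hb ha hba
    have hsum := D.ext_sum (show D.q0 ≤ a from ha)
    have hsum' := D.ext_sum (show D.q0 ≤ b from hb)
    have single := Finset.single_le_sum (f := fun j => D.Ext a j - D.Ext b j)
      (fun j _ => sub_nonneg.2 (mono j)) (Finset.mem_univ i)
    have esum : ∑ j, (D.Ext a j - D.Ext b j) = a - b := by
      rw [Finset.sum_sub_distrib, Fin.sum_univ_four, Fin.sum_univ_four]
      linarith
    exact ⟨by linarith [single, esum], sub_nonneg.2 (mono i)⟩
  rw [lipschitzOnWith_iff_dist_le_mul]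
  intro q hq q' hq'
  simp only [NNReal.coe_one, one_mul, Real.dist_eq]
  rcases le_total q' q with h | h
  · obtain ⟨k1, k2⟩ := key q hq q' hq' h
    rw [abs_of_nonneg k2, abs_of_nonneg (by linarith)]
    exact k1
  · obtain ⟨k1, k2⟩ := key q' hq' q hq h
    rw [abs_sub_comm, abs_sub_comm q q', abs_of_nonneg k2, abs_of_nonneg (by linarith)]
    exact k1

lemma ext_continuousOn : ContinuousOn D.Ext (Ici D.q0) := by
  apply continuousOn_pi.2
  intro i
  exact (D.ext_lipschitz i).continuousOn

lemma ext_proper (i : Fin 4) : Tendsto (fun q => D.Ext q i) atTop atTop := by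
  rw [tendsto_atTop_atTop]
  intro C
  obtain ⟨m, hm⟩ := pow_unbounded_of_one_lt (C / D.V0 i) D.hγ
  refine ⟨D.γ ^ m * D.q0, fun q hq => ?_⟩
  have hx0 : D.q0 ≤ D.γ ^ m * D.q0 := by
    nlinarith [D.one_le_pow m, D.hq0]
  have h1 : D.Ext (D.γ ^ m * D.q0) i ≤ D.Ext q i :=
    D.ext_monoOn i hx0 (hx0.trans hq) hq
  have h2 : D.Ext (D.γ ^ m * D.q0) i = D.γ ^ m * D.V0 i := by
    rw [D.ext_junction m]; simp
  have h3 : C < D.γ ^ m * D.V0 i := by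
    rw [div_lt_iff₀ (D.V0pos i)] at hm; linarith
  linarith

lemma ext_selfsim {q : ℝ} (h : D.q0 ≤ q) : D.Ext (D.γ * q) = D.γ • D.Ext q := by
  obtain ⟨w1, w2⟩ := D.exists_window h
  set m := D.nIdx q
  have w1' : D.γ ^ (m+1) * D.q0 ≤ D.γ * q := by rw [pow_succ]; nlinarith [D.γpos]
  have w2' : D.γ * q ≤ D.γ ^ (m+1) * D.q3 := by rw [pow_succ]; nlinarith [D.γpos]
  rw [D.ext_window w1' w2', D.ext_window w1 w2]
  have : D.γ * q / D.γ ^ (m+1) = q / D.γ ^ m := by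
    rw [pow_succ, mul_comm (D.γ ^ m) D.γ]
    exact mul_div_mul_left q (D.γ ^ m) (ne_of_gt D.γpos)
  rw [this, smul_smul]
  congr 1
  rw [pow_succ]
  ring

end SD
end GS4

namespace GS4
namespace SD
variable (D : SD)

lemma piece_sel {u : ℝ} (h0 : D.q0 ≤ u) (h3 : u < D.q3) :
    ∃ ci di : ℝ, ∃ W s : Fin 4 → ℝ, ci < di ∧ D.q0 ≤ ci ∧ di ≤ D.q3 ∧ ci ≤ u ∧ u < di ∧
      ∀ t ∈ Icc ci di, ∀ i, D.base t i = W i + (t - ci) * s i := by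
  rcases lt_or_ge u D.q1 with h | h
  · exact ⟨D.q0, D.q1, D.V0, D.s1, D.h01, le_rfl, D.h13.le, h0, h,
      fun t ht i => D.base_piece1 ht.1 ht.2 i⟩
  rcases lt_or_ge u D.q2 with h' | h'
  · exact ⟨D.q1, D.q2, D.V1, D.s2, D.h12, D.h01.le, D.h23.le, h, h',
      fun t ht i => D.base_piece2 ht.1 ht.2 i⟩
  · exact ⟨D.q2, D.q3, D.V2, D.s3, D.h23, D.h02.le, le_rfl, h', h3,
      fun t ht i => D.base_piece3 ht.1 ht.2 i⟩

lemma piece_sel' {u : ℝ} (h0 : D.q0 < u) (h3 : u ≤ D.q3) :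
    ∃ ci di : ℝ, ∃ W s : Fin 4 → ℝ, ci < di ∧ D.q0 ≤ ci ∧ di ≤ D.q3 ∧ ci < u ∧ u ≤ di ∧
      ∀ t ∈ Icc ci di, ∀ i, D.base t i = W i + (t - ci) * s i := by
  rcases le_or_gt u D.q1 with h | h
  · exact ⟨D.q0, D.q1, D.V0, D.s1, D.h01, le_rfl, D.h13.le, h0, h,
      fun t ht i => D.base_piece1 ht.1 ht.2 i⟩
  rcases le_or_gt u D.q2 with h' | h'
  · exact ⟨D.q1, D.q2, D.V1, D.s2, D.h12, D.h01.le, D.h23.le, h, h',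
      fun t ht i => D.base_piece2 ht.1 ht.2 i⟩
  · exact ⟨D.q2, D.q3, D.V2, D.s3, D.h23, D.h02.le, le_rfl, h', h3,
      fun t ht i => D.base_piece3 ht.1 ht.2 i⟩

lemma ext_scaled_piece {m : ℕ} {ci di : ℝ} {W s : Fin 4 → ℝ}
    (hci : D.q0 ≤ ci) (hdi : di ≤ D.q3)
    (hpiece : ∀ t ∈ Icc ci di, ∀ i, D.base t i = W i + (t - ci) * s i) :
    ∀ t ∈ Icc (D.γ ^ m * ci) (D.γ ^ m * di), ∀ i,
      D.Ext t i = s i * t + D.γ ^ m * (W i - ci * s i) := by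
  intro t ht i
  have hgm := D.pow_pos' m
  have w1 : D.γ ^ m * D.q0 ≤ t := le_trans (mul_le_mul_of_nonneg_left hci hgm.le) ht.1
  have w2 : t ≤ D.γ ^ m * D.q3 := le_trans ht.2 (mul_le_mul_of_nonneg_left hdi hgm.le)
  rw [D.ext_window w1 w2]
  have hu1 : ci ≤ t / D.γ ^ m := by rw [le_div_iff₀ hgm]; linarith [ht.1]
  have hu2 : t / D.γ ^ m ≤ di := by rw [div_le_iff₀ hgm]; linarith [ht.2]
  have := hpiece (t / D.γ ^ m) ⟨hu1, hu2⟩ i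
  simp only [Pi.smul_apply, smul_eq_mul, this]
  have hc : t / D.γ ^ m * D.γ ^ m = t := div_mul_cancel₀ t (ne_of_gt hgm)
  linear_combination s i * hc

lemma ext_affine_right (q : ℝ) (hq : q ∈ Ici D.q0) :
    ∃ ε > 0, ∃ c d : Fin 4 → ℝ, ∀ t ∈ Ici D.q0 ∩ Icc q (q + ε), ∀ i,
      D.Ext t i = c i * t + d i := by
  obtain ⟨w1, w2⟩ := D.nIdx_spec hq
  set m := D.nIdx q
  have hgm := D.pow_pos' m
  have hu1 : D.q0 ≤ q / D.γ ^ m := by rw [le_div_iff₀ hgm]; linarith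
  have hu2 : q / D.γ ^ m < D.q3 := by
    rw [div_lt_iff₀ hgm, D.hq3]
    calc q < D.γ ^ (m + 1) * D.q0 := w2
      _ = D.γ * D.q0 * D.γ ^ m := by rw [pow_succ]; ring
  obtain ⟨ci, di, W, s, hcd, hc0, hd3, hcu, hud, hpiece⟩ := D.piece_sel hu1 hu2
  refine ⟨D.γ ^ m * di - q, ?_, s, fun i => D.γ ^ m * (W i - ci * s i), ?_⟩
  · have : q / D.γ ^ m < di := hud
    rw [div_lt_iff₀ hgm] at this
    linarith
  · intro t ht i
    apply D.ext_scaled_piece hc0 hd3 hpiece t _ i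
    constructor
    · have : ci ≤ q / D.γ ^ m := hcu
      rw [le_div_iff₀ hgm] at this
      linarith [ht.2.1]
    · linarith [ht.2.2]

lemma ext_affine_left (q : ℝ) (hq : q ∈ Ici D.q0) :
    ∃ ε > 0, ∃ a b : Fin 4 → ℝ, ∀ t ∈ Ici D.q0 ∩ Icc (q - ε) q, ∀ i,
      D.Ext t i = a i * t + b i := by
  rcases eq_or_lt_of_le (show D.q0 ≤ q from hq) with he | hlt
  · refine ⟨1, one_pos, 0, D.Ext q, fun t ht i => ?_⟩
    have : t = q := le_antisymm ht.2.2 (he ▸ ht.1)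
    rw [this]
    simp
  · -- find m' with γ^m' q0 < q ≤ γ^m' q3
    obtain ⟨w1, w2⟩ := D.exists_window (le_of_lt hlt)
    set m := D.nIdx q with hm
    have key : ∃ m' : ℕ, D.γ ^ m' * D.q0 < q ∧ q ≤ D.γ ^ m' * D.q3 := by
      rcases lt_or_eq_of_le w1 with h | h
      · exact ⟨m, h, w2⟩
      · have hm1 : m ≠ 0 := by
          intro h0
          rw [h0] at h
          simp at h
          exact absurd h.symm (ne_of_gt hlt)
        obtain ⟨m', hm'⟩ : ∃ m', m = m' + 1 := ⟨m - 1, by omega⟩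
        rw [hm'] at h
        refine ⟨m', ?_, ?_⟩
        · rw [← h, pow_succ]
          have : D.γ ^ m' < D.γ ^ (m' + 1) := pow_lt_pow_right₀ D.hγ (by omega)
          exact mul_lt_mul_of_pos_right this D.hq0
        · rw [← h, D.pow_q3]
      -- in second case q = γ^{m'+1} q0 = γ^{m'} q3
    obtain ⟨m', w1', w2'⟩ := key
    have hgm := D.pow_pos' m'
    have hu1 : D.q0 < q / D.γ ^ m' := by rw [lt_div_iff₀ hgm]; linarith
    have hu2 : q / D.γ ^ m' ≤ D.q3 := by rw [div_le_iff₀ hgm]; linarith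
    obtain ⟨ci, di, W, s, hcd, hc0, hd3, hcu, hud, hpiece⟩ := D.piece_sel' hu1 hu2
    refine ⟨q - D.γ ^ m' * ci, ?_, s, fun i => D.γ ^ m' * (W i - ci * s i), ?_⟩
    · have : ci < q / D.γ ^ m' := hcu
      rw [lt_div_iff₀ hgm] at this
      linarith
    · intro t ht i
      apply D.ext_scaled_piece hc0 hd3 hpiece t _ i
      constructor
      · linarith [ht.2.1]
      · have : q / D.γ ^ m' ≤ di := hud
        rw [div_le_iff₀ hgm] at this
        linarith [ht.2.2]

lemma ext_affine : ∀ q ∈ Ici D.q0, ∃ ε > 0, ∃ a b c d : Fin 4 → ℝ,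
    (∀ t ∈ Ici D.q0 ∩ Icc (q - ε) q, ∀ i, D.Ext t i = a i * t + b i) ∧
    (∀ t ∈ Ici D.q0 ∩ Icc q (q + ε), ∀ i, D.Ext t i = c i * t + d i) := by
  intro q hq
  obtain ⟨εL, hεL, a, b, hab⟩ := D.ext_affine_left q hq
  obtain ⟨εR, hεR, c, d, hcd⟩ := D.ext_affine_right q hq
  refine ⟨min εL εR, lt_min hεL hεR, a, b, c, d, ?_, ?_⟩
  · intro t ht i
    refine hab t ⟨ht.1, ⟨?_, ht.2.2⟩⟩ i
    have := min_le_left εL εR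
    linarith [ht.2.1]
  · intro t ht i
    refine hcd t ⟨ht.1, ⟨ht.2.1, ?_⟩⟩ i
    have := min_le_right εL εR
    linarith [ht.2.2]

end SD
end GS4

namespace GS4
namespace SD
variable (D : SD)

lemma ext_eq_scaled {j j' : Fin 4} {e : ℝ} (he0 : D.q0 ≤ e) (he3 : e ≤ D.q3)
    (heq : D.base e j = D.base e j') (k : ℕ) :
    D.Ext (D.γ ^ k * e) j = D.Ext (D.γ ^ k * e) j' := by
  have hgk := D.pow_pos' k
  have w1 : D.γ ^ k * D.q0 ≤ D.γ ^ k * e := mul_le_mul_of_nonneg_left he0 hgk.le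
  have w2 : D.γ ^ k * e ≤ D.γ ^ k * D.q3 := mul_le_mul_of_nonneg_left he3 hgk.le
  rw [D.ext_window w1 w2, mul_div_cancel_left₀ e (ne_of_gt hgk)]
  simp only [Pi.smul_apply, smul_eq_mul, heq]

lemma gamma_zpow_pos (z : ℤ) : (0:ℝ) < D.γ ^ z := zpow_pos D.γpos z

lemma g3_case (j : ℕ) (hj : j + 1 < 4) (e c v : ℝ)
    (he0 : D.q0 ≤ e) (he3 : e < D.q3)
    (heq : D.base e ⟨j, Nat.lt_of_succ_lt hj⟩ = D.base e ⟨j + 1, hj⟩)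
    (H1 : ∀ u ∈ Icc e D.q3,
      (∑ i : Fin 4, if (i:ℕ) ≤ j then D.base u i else 0) = v + max (u - c) 0)
    (H2 : ∀ u ∈ Icc D.q0 e,
      D.γ * (∑ i : Fin 4, if (i:ℕ) ≤ j then D.base u i else 0) = v + max (D.γ * u - c) 0)
    (H : Set ℝ) (hH : H ⊆ Ici D.q0) (hoc : H.OrdConnected)
    (hstrict : ∀ q ∈ H, D.Ext q ⟨j, Nat.lt_of_succ_lt hj⟩ < D.Ext q ⟨j + 1, hj⟩) :
    SlopeZeroOneOn H fun q => ∑ i : Fin 4, if (i : ℕ) ≤ j then D.Ext q i else 0 := by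
  rcases H.eq_empty_or_nonempty with rfl | ⟨x, hx⟩
  · exact ⟨0, 0, fun t ht => absurd ht (notMem_empty t)⟩
  have hγ := D.hγ
  have hγpos := D.γpos
  have hepos : 0 < e := lt_of_lt_of_le D.hq0 he0
  have heq0 : e < D.γ * D.q0 := D.hq3 ▸ he3
  have hnot : ∀ z : ℤ, D.q0 ≤ D.γ ^ z * e → D.γ ^ z * e ∉ H := by
    intro z hz hmem
    have hz0 : 0 ≤ z := by
      by_contra hneg
      push_neg at hneg
      have h1 : D.γ ^ z ≤ D.γ ^ (-1 : ℤ) := zpow_le_zpow_right₀ hγ.le (by omega)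
      have h2 : D.γ ^ (-1 : ℤ) = (D.γ)⁻¹ := zpow_neg_one D.γ
      have h3 : D.γ ^ z * e ≤ D.γ⁻¹ * e := by
        rw [← h2]; exact mul_le_mul_of_nonneg_right h1 hepos.le
      have h4 : D.γ⁻¹ * e < D.q0 := by
        rw [inv_mul_lt_iff₀ hγpos]
        linarith [heq0]
      linarith
    have hcast : D.γ ^ z = D.γ ^ (z.toNat) := by
      rw [← zpow_natCast, Int.toNat_of_nonneg hz0]
    rw [hcast] at hmem
    exact absurd (hstrict _ hmem)
      (not_lt.2 (le_of_eq (D.ext_eq_scaled he0 he3.le heq z.toNat).symm))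
  have hxq0 : D.q0 ≤ x := hH hx
  have hxpos : 0 < x := lt_of_lt_of_le D.hq0 hxq0
  set n : ℤ := ⌊Real.logb D.γ (x / e)⌋ with hn
  have hxe : 0 < x / e := div_pos hxpos hepos
  have hrl : D.γ ^ (Real.logb D.γ (x / e)) = x / e := Real.rpow_logb hγpos (by linarith) hxe
  have hfl1 : D.γ ^ n * e ≤ x := by
    have h1 : ((n : ℤ) : ℝ) ≤ Real.logb D.γ (x / e) := Int.floor_le _
    have h2 : D.γ ^ ((n : ℤ) : ℝ) ≤ D.γ ^ Real.logb D.γ (x / e) :=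
      (Real.rpow_le_rpow_left_iff hγ).2 h1
    rw [hrl, Real.rpow_intCast] at h2
    calc D.γ ^ n * e ≤ (x / e) * e := mul_le_mul_of_nonneg_right h2 hepos.le
      _ = x := div_mul_cancel₀ x (ne_of_gt hepos)
  have hfl2 : x < D.γ ^ (n + 1) * e := by
    have h1 : Real.logb D.γ (x / e) < ((n : ℤ) : ℝ) + 1 := Int.lt_floor_add_one _
    have h2 : D.γ ^ Real.logb D.γ (x / e) < D.γ ^ (((n : ℤ) : ℝ) + 1) :=
      (Real.rpow_lt_rpow_left_iff hγ).2 h1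
    rw [hrl] at h2
    have h3 : D.γ ^ (((n : ℤ) : ℝ) + 1) = D.γ ^ (n + 1 : ℤ) := by
      rw [show (((n : ℤ) : ℝ) + 1) = (((n + 1 : ℤ) : ℤ) : ℝ) by push_cast; ring,
        Real.rpow_intCast]
    rw [h3] at h2
    calc x = (x / e) * e := (div_mul_cancel₀ x (ne_of_gt hepos)).symm
      _ < D.γ ^ (n+1) * e := mul_lt_mul_of_pos_right h2 hepos
  have hxs : D.γ ^ n * e < x := by
    rcases lt_or_eq_of_le hfl1 with h | h
    · exact h
    · exact absurd hx (h ▸ hnot n (h ▸ hxq0))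
  have hsub : ∀ y ∈ H, D.γ ^ n * e < y ∧ y < D.γ ^ (n + 1) * e := by
    intro y hy
    constructor
    · by_contra hc
      push_neg at hc
      have hmem : D.γ ^ n * e ∈ H := hoc.out hy hx ⟨hc, hxs.le⟩
      exact hnot n (hH hmem) hmem
    · by_contra hc
      push_neg at hc
      have hmem : D.γ ^ (n+1) * e ∈ H := hoc.out hx hy ⟨hfl2.le, hc⟩
      exact hnot (n+1) (hH hmem) hmem
  refine ⟨D.γ ^ n * c, D.γ ^ n * v, fun t ht => ?_⟩
  obtain ⟨ht1, ht2⟩ := hsub t ht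
  have htq0 : D.q0 ≤ t := hH ht
  obtain ⟨w1, w2⟩ := D.exists_window htq0
  set m := D.nIdx t with hm
  have hgm := D.pow_pos' m
  set u := t / D.γ ^ m with hu
  have hut : D.γ ^ m * u = t := by
    rw [hu, mul_comm, div_mul_cancel₀ t (ne_of_gt hgm)]
  obtain ⟨hu1, hu2⟩ := D.u_mem w1 w2
  have hfs : (∑ i : Fin 4, if (i:ℕ) ≤ j then D.Ext t i else 0)
      = D.γ ^ m * (∑ i : Fin 4, if (i:ℕ) ≤ j then D.base u i else 0) := by
    rw [D.ext_window w1 w2, Finset.mul_sum]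
    apply Finset.sum_congr rfl
    intro i _
    split
    · simp [hu]
    · simp
  have hzm : (D.γ : ℝ) ^ m = D.γ ^ (m : ℤ) := (zpow_natCast D.γ m).symm
  have hgn := D.gamma_zpow_pos n
  rcases le_or_gt u e with hue | hue
  · -- m = n + 1
    have hb1 : t ≤ D.γ ^ (m : ℤ) * e := by
      rw [← hzm]
      calc t = D.γ ^ m * u := hut.symm
        _ ≤ D.γ ^ m * e := mul_le_mul_of_nonneg_left hue hgm.le
    have hb2 : D.γ ^ ((m : ℤ) - 1) * e < t := by
      have he' : D.γ ^ ((m : ℤ) - 1) * e = D.γ ^ (m:ℤ) * (e / D.γ) := by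
        rw [zpow_sub_one₀ (ne_of_gt hγpos)]
        field_simp
      rw [he', ← hzm]
      have he2 : e / D.γ < D.q0 := by
        rw [div_lt_iff₀ hγpos]
        linarith [heq0]
      calc D.γ ^ m * (e / D.γ) < D.γ ^ m * D.q0 := mul_lt_mul_of_pos_left he2 hgm
        _ ≤ t := w1
    have hn1 : n < (m : ℤ) := by
      have h := lt_of_lt_of_le ht1 hb1
      exact (zpow_lt_zpow_iff_right₀ hγ).1 (lt_of_mul_lt_mul_right h hepos.le)
    have hn2 : (m : ℤ) - 1 < n + 1 := by
      have h := lt_trans hb2 ht2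
      exact (zpow_lt_zpow_iff_right₀ hγ).1 (lt_of_mul_lt_mul_right h hepos.le)
    have hmn : (m : ℤ) = n + 1 := by omega
    have h2 := H2 u ⟨hu1, hue⟩
    simp only
    rw [hfs, hzm, hmn, zpow_add_one₀ (ne_of_gt hγpos)]
    have hgt : D.γ ^ n * D.γ * u = t := by
      rw [← zpow_add_one₀ (ne_of_gt hγpos), ← hmn, ← hzm, hut]
    calc D.γ ^ n * D.γ * (∑ i : Fin 4, if (i:ℕ) ≤ j then D.base u i else 0)
        = D.γ ^ n * (D.γ * (∑ i : Fin 4, if (i:ℕ) ≤ j then D.base u i else 0)) := by ring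
      _ = D.γ ^ n * (v + max (D.γ * u - c) 0) := by rw [h2]
      _ = D.γ ^ n * v + D.γ ^ n * max (D.γ * u - c) 0 := by ring
      _ = D.γ ^ n * v + max (D.γ ^ n * (D.γ * u - c)) (D.γ ^ n * 0) := by
          rw [mul_max_of_nonneg _ _ hgn.le]
      _ = D.γ ^ n * v + max (t - D.γ ^ n * c) 0 := by
          rw [mul_zero]
          congr 2
          linarith [hgt]
  · -- m = n
    have hb1 : D.γ ^ (m : ℤ) * e < t := by
      rw [← hzm]
      calc D.γ ^ m * e < D.γ ^ m * u := mul_lt_mul_of_pos_left hue hgm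
        _ = t := hut
    have hb2 : t ≤ D.γ ^ ((m : ℤ) + 1) * e := by
      have he' : D.γ ^ ((m : ℤ) + 1) * e = D.γ ^ (m:ℤ) * (D.γ * e) := by
        rw [zpow_add_one₀ (ne_of_gt hγpos)]
        ring
      rw [he', ← hzm]
      calc t ≤ D.γ ^ m * D.q3 := w2
        _ = D.γ ^ m * (D.γ * D.q0) := by rw [D.hq3]
        _ ≤ D.γ ^ m * (D.γ * e) := by
            apply mul_le_mul_of_nonneg_left _ hgm.le
            exact mul_le_mul_of_nonneg_left he0 hγpos.le
    have hn1 : (m : ℤ) < n + 1 := by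
      have h := lt_trans hb1 ht2
      exact (zpow_lt_zpow_iff_right₀ hγ).1 (lt_of_mul_lt_mul_right h hepos.le)
    have hn2 : n < (m : ℤ) + 1 := by
      have h := lt_of_lt_of_le ht1 hb2
      exact (zpow_lt_zpow_iff_right₀ hγ).1 (lt_of_mul_lt_mul_right h hepos.le)
    have hmn : (m : ℤ) = n := by omega
    have h1 := H1 u ⟨hue.le, hu2⟩
    simp only
    rw [hfs, hzm, hmn, h1]
    have hgt : D.γ ^ n * u = t := by rw [← hmn, ← hzm, hut]
    calc D.γ ^ n * (v + max (u - c) 0)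
        = D.γ ^ n * v + D.γ ^ n * max (u - c) 0 := by ring
      _ = D.γ ^ n * v + max (D.γ ^ n * (u - c)) (D.γ ^ n * 0) := by
          rw [mul_max_of_nonneg _ _ hgn.le]
      _ = D.γ ^ n * v + max (t - D.γ ^ n * c) 0 := by
          rw [mul_zero]
          congr 2
          linarith [hgt]

end SD
end GS4

namespace GS4

lemma IsGenNSystem.mono {n : ℕ} {I I' : Set ℝ} {P : ℝ → Fin n → ℝ}
    (h : IsGenNSystem n I P) (hsub : I' ⊆ I) : IsGenNSystem n I' P := by
  obtain ⟨h1, h2, h3, h4, h5⟩ := h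
  refine ⟨h1.mono hsub, ?_, fun q hq => h3 q (hsub hq),
    fun i => ⟨(h4 i).1.mono hsub, (h4 i).2.mono hsub⟩,
    fun j hj H hH => h5 j hj H (hH.trans hsub)⟩
  intro q hq
  obtain ⟨ε, hε, a, b, c, d, hl, hr⟩ := h2 q (hsub hq)
  exact ⟨ε, hε, a, b, c, d, fun t ht i => hl t ⟨hsub ht.1, ht.2⟩ i,
    fun t ht i => hr t ⟨hsub ht.1, ht.2⟩ i⟩

namespace SD
variable (D : SD)

lemma isGenNSystem_ext
    (hG3 : ∀ (j : ℕ) (hj : j + 1 < 4) (H : Set ℝ), H ⊆ Ici D.q0 → H.OrdConnected →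
      (∀ q ∈ H, D.Ext q ⟨j, Nat.lt_of_succ_lt hj⟩ < D.Ext q ⟨j + 1, hj⟩) →
      SlopeZeroOneOn H fun q => ∑ i : Fin 4, if (i : ℕ) ≤ j then D.Ext q i else 0) :
    IsGenNSystem 4 (Ici D.q0) D.Ext := by
  refine ⟨D.ext_continuousOn, D.ext_affine, ?_, fun i => ⟨D.ext_monoOn i, D.ext_lipschitz i⟩,
    hG3⟩
  intro q hq
  exact ⟨fun i => (D.ext_pos hq i).le, D.ext_sorted hq,
    by rw [Fin.sum_univ_four]; exact D.ext_sum hq⟩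

lemma ext_unique {P : ℝ → Fin 4 → ℝ}
    (hbase : ∀ q ∈ Icc D.q0 D.q3, P q = D.Ext q)
    (hsim : ∀ q, D.q0 ≤ q → P (D.γ * q) = D.γ • P q) :
    EqOn D.Ext P (Ici D.q0) := by
  have win : ∀ m : ℕ, ∀ q, D.γ ^ m * D.q0 ≤ q → q ≤ D.γ ^ m * D.q3 → P q = D.Ext q := by
    intro m
    induction m with
    | zero =>
      intro q h1 h2
      rw [pow_zero, one_mul] at h1 h2
      exact hbase q ⟨h1, h2⟩
    | succ k ih =>
      intro q h1 h2
      have hγpos := D.γpos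
      have hq' : D.γ ^ k * D.q0 ≤ q / D.γ := by
        rw [le_div_iff₀ hγpos]
        rw [pow_succ] at h1
        linarith
      have hq'' : q / D.γ ≤ D.γ ^ k * D.q3 := by
        rw [div_le_iff₀ hγpos]
        rw [pow_succ] at h2
        linarith
      have hq0' : D.q0 ≤ q / D.γ := le_trans (by nlinarith [D.one_le_pow k, D.hq0]) hq'
      have hqq : D.γ * (q / D.γ) = q := by
        rw [mul_comm]
        exact div_mul_cancel₀ q (ne_of_gt hγpos)
      calc P q = P (D.γ * (q / D.γ)) := by rw [hqq]
        _ = D.γ • P (q / D.γ) := hsim _ hq0'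
        _ = D.γ • D.Ext (q / D.γ) := by rw [ih _ hq' hq'']
        _ = D.Ext (D.γ * (q / D.γ)) := (D.ext_selfsim hq0').symm
        _ = D.Ext q := by rw [hqq]
  intro q hq
  obtain ⟨w1, w2⟩ := D.exists_window hq
  exact (win _ q w1 w2).symm

def Nset : Set (Fin 4 → ℝ) := (fun u : ℝ => u⁻¹ • D.base u) '' Icc D.q0 D.q3

lemma Nset_closed : IsClosed D.Nset := by
  have hcont : ContinuousOn (fun u : ℝ => u⁻¹ • D.base u) (Icc D.q0 D.q3) := by
    apply ContinuousOn.fun_smul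
    · exact ContinuousOn.inv₀ continuousOn_id fun u hu => ne_of_gt (lt_of_lt_of_le D.hq0 hu.1)
    · exact D.base_continuous.continuousOn
  exact (isCompact_Icc.image_of_continuousOn hcont).isClosed

lemma normalize_ext {q : ℝ} (h : D.q0 ≤ q) :
    q⁻¹ • D.Ext q = (q / D.γ ^ D.nIdx q)⁻¹ • D.base (q / D.γ ^ D.nIdx q) := by
  obtain ⟨w1, w2⟩ := D.exists_window h
  rw [D.ext_window w1 w2, smul_smul]
  congr 1
  have hgm := D.pow_pos' (D.nIdx q)
  have hq : 0 < q := lt_of_lt_of_le D.hq0 h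
  field_simp

end SD
end GS4

namespace GS4
namespace SD
variable (D : SD)

lemma accPts_eq : accPts 4 D.Ext = D.Nset := by
  ext x
  constructor
  · intro hx
    have hev : ∀ᶠ q in (atTop : Filter ℝ), q⁻¹ • D.Ext q ∈ D.Nset := by
      filter_upwards [eventually_ge_atTop D.q0] with q hq
      obtain ⟨w1, w2⟩ := D.exists_window hq
      obtain ⟨u1, u2⟩ := D.u_mem w1 w2
      exact ⟨q / D.γ ^ (D.nIdx q), ⟨u1, u2⟩, (D.normalize_ext hq).symm⟩
    have h1 : map (fun q : ℝ => q⁻¹ • D.Ext q) atTop ≤ 𝓟 D.Nset :=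
      le_principal_iff.2 (mem_map.2 hev)
    have h2 : ClusterPt x (𝓟 D.Nset) := ClusterPt.mono hx h1
    exact D.Nset_closed.closure_eq ▸ mem_closure_iff_clusterPt.2 h2
  · rintro ⟨u, hu, rfl⟩
    have hupos : 0 < u := lt_of_lt_of_le D.hq0 hu.1
    simp only [accPts, mem_setOf_eq]
    rw [mapClusterPt_iff_frequently]
    intro s hs
    rw [frequently_atTop]
    intro a
    obtain ⟨k, hk⟩ := pow_unbounded_of_one_lt (a / u) D.hγ
    have hgk := D.pow_pos' k
    refine ⟨D.γ ^ k * u, ?_, ?_⟩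
    · rw [div_lt_iff₀ hupos] at hk
      linarith
    · have heq : (D.γ ^ k * u)⁻¹ • D.Ext (D.γ ^ k * u) = u⁻¹ • D.base u := by
        rw [D.ext_window (mul_le_mul_of_nonneg_left hu.1 hgk.le)
          (mul_le_mul_of_nonneg_left hu.2 hgk.le),
          mul_div_cancel_left₀ u (ne_of_gt hgk), smul_smul]
        congr 1
        rw [mul_inv]
        field_simp
      rw [heq]
      exact mem_of_mem_nhds hs

lemma seg_mem {qa qb u : ℝ} {W s : Fin 4 → ℝ} (hqa : 0 < qa) (hab : qa < qb)
    (h1 : qa ≤ u) (h2 : u ≤ qb) :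
    u⁻¹ • (fun i => W i + (u - qa) * s i : Fin 4 → ℝ) ∈
      segment ℝ (qa⁻¹ • W) (qb⁻¹ • (fun i => W i + (qb - qa) * s i : Fin 4 → ℝ)) := by
  have hu : 0 < u := lt_of_lt_of_le hqa h1
  have hd : 0 < qb - qa := sub_pos.2 hab
  have hqb : 0 < qb := hqa.trans hab
  refine ⟨qa * (qb - u) / (u * (qb - qa)), qb * (u - qa) / (u * (qb - qa)), ?_, ?_, ?_, ?_⟩
  · apply div_nonneg
    · apply mul_nonneg hqa.le
      linarith
    · positivity
  · apply div_nonneg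
    · apply mul_nonneg hqb.le
      linarith
    · positivity
  · field_simp
    ring
  · funext i
    simp only [Pi.smul_apply, Pi.add_apply, smul_eq_mul]
    field_simp
    ring

lemma q3_norm : D.q3⁻¹ • D.V3 = D.q0⁻¹ • D.V0 := by
  funext i
  simp only [Pi.smul_apply, smul_eq_mul, D.V3_eq i, D.hq3]
  rw [mul_inv]
  have hne := ne_of_gt D.γpos
  field_simp

lemma Nset_sub_hull :
    D.Nset ⊆ convexHull ℝ {D.q0⁻¹ • D.V0, D.q1⁻¹ • D.V1, D.q2⁻¹ • D.V2} := by
  rintro _ ⟨u, hu, rfl⟩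
  show u⁻¹ • D.base u ∈ _
  set p0 := D.q0⁻¹ • D.V0
  set p1 := D.q1⁻¹ • D.V1
  set p2 := D.q2⁻¹ • D.V2
  have hp0 : p0 ∈ ({p0, p1, p2} : Set (Fin 4 → ℝ)) := mem_insert _ _
  have hp1 : p1 ∈ ({p0, p1, p2} : Set (Fin 4 → ℝ)) := mem_insert_of_mem _ (mem_insert _ _)
  have hp2 : p2 ∈ ({p0, p1, p2} : Set (Fin 4 → ℝ)) :=
    mem_insert_of_mem _ (mem_insert_of_mem _ rfl)
  rcases le_or_gt u D.q1 with h | h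
  · have hbe : u⁻¹ • D.base u = u⁻¹ • (fun i => D.V0 i + (u - D.q0) * D.s1 i : Fin 4 → ℝ) := by
      congr 1
      funext i
      exact D.base_piece1 hu.1 h i
    rw [hbe]
    apply segment_subset_convexHull hp0 hp1
    exact seg_mem D.hq0 D.h01 hu.1 h
  rcases le_or_gt u D.q2 with h' | h'
  · have hbe : u⁻¹ • D.base u = u⁻¹ • (fun i => D.V1 i + (u - D.q1) * D.s2 i : Fin 4 → ℝ) := by
      congr 1
      funext i
      exact D.base_piece2 h.le h' i
    rw [hbe]
    apply segment_subset_convexHull hp1 hp2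
    exact seg_mem D.hq1pos D.h12 h.le h'
  · have hbe : u⁻¹ • D.base u = u⁻¹ • (fun i => D.V2 i + (u - D.q2) * D.s3 i : Fin 4 → ℝ) := by
      congr 1
      funext i
      exact D.base_piece3 h'.le hu.2 i
    rw [hbe]
    have hseg := seg_mem (qa := D.q2) (qb := D.q3) (W := D.V2) (s := D.s3) D.hq2pos D.h23 h'.le hu.2
    have he3 : D.q3⁻¹ • (fun i => D.V2 i + (D.q3 - D.q2) * D.s3 i : Fin 4 → ℝ) = p0 := by
      have : (fun i => D.V2 i + (D.q3 - D.q2) * D.s3 i : Fin 4 → ℝ) = D.V3 := rfl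
      rw [this]
      exact D.q3_norm
    rw [he3] at hseg
    exact segment_subset_convexHull hp2 hp0 hseg

lemma pts_sub_Nset :
    ({D.q0⁻¹ • D.V0, D.q1⁻¹ • D.V1, D.q2⁻¹ • D.V2} : Set (Fin 4 → ℝ)) ⊆ D.Nset := by
  intro p hp
  rcases hp with h | h | h
  · exact ⟨D.q0, ⟨le_rfl, D.h03.le⟩, by simp only; rw [D.base_q0, h]⟩
  · exact ⟨D.q1, ⟨D.h01.le, D.h13.le⟩, by simp only; rw [D.base_q1, h]⟩
  · rw [mem_singleton_iff] at h
    exact ⟨D.q2, ⟨D.h02.le, D.h23.le⟩, by simp only; rw [D.base_q2, h]⟩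

lemma kset_ext :
    Kset 4 D.Ext = convexHull ℝ {D.q0⁻¹ • D.V0, D.q1⁻¹ • D.V1, D.q2⁻¹ • D.V2} := by
  rw [Kset, D.accPts_eq]
  apply subset_antisymm
  · exact convexHull_min D.Nset_sub_hull (convex_convexHull ℝ _)
  · exact convexHull_mono D.pts_sub_Nset

end SD
end GS4

open Topology

namespace GS4

lemma not_diff_kink {f : ℝ → ℝ} {p c0 c1 m : ℝ} (hm : m ≠ 0)
    (hloc : ∀ᶠ t in 𝓝 p, f t = c0 + c1 * t + m * |t - p|) : ¬DifferentiableAt ℝ f p := by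
  intro hdiff
  have hee : f =ᶠ[𝓝 p] fun t => c0 + c1 * t + m * |t - p| := hloc
  have h1 : DifferentiableAt ℝ (fun t => c0 + c1 * t + m * |t - p|) p :=
    hee.differentiableAt_iff.1 hdiff
  have h2 : DifferentiableAt ℝ (fun t : ℝ => c0 + c1 * t) p := by fun_prop
  have h3 : DifferentiableAt ℝ (fun t => m * |t - p|) p := by
    have hd := h1.sub h2
    have : (fun t => c0 + c1 * t + m * |t - p| - (c0 + c1 * t)) = fun t => m * |t - p| := by
      funext t
      ring
    rw [← this]; exact hd
  have h4 : DifferentiableAt ℝ (fun t => |t - p|) p := by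
    have hd := h3.const_mul m⁻¹
    have : (fun t => m⁻¹ * (m * |t - p|)) = fun t => |t - p| := by
      funext t
      rw [inv_mul_cancel_left₀ hm]
    rwa [this] at hd
  have h5 : DifferentiableAt ℝ (fun s : ℝ => |s|) 0 := by
    have hg : DifferentiableAt ℝ (fun s : ℝ => s + p) 0 := by fun_prop
    have h4' : DifferentiableAt ℝ (fun t => |t - p|) ((fun s : ℝ => s + p) 0) := by
      show DifferentiableAt ℝ (fun t => |t - p|) (0 + p)
      rwa [zero_add]
    have hcomp := h4'.comp 0 hg
    have : ((fun t => |t - p|) ∘ fun s : ℝ => s + p) = fun s : ℝ => |s| := by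
      funext s
      simp [Function.comp]
    rwa [this] at hcomp
  exact not_differentiableAt_abs_zero h5

namespace SD
variable (D : SD)

lemma ext_eventuallyEq_base {q : ℝ} (h : q ∈ Ioo D.q0 D.q3) : D.Ext =ᶠ[𝓝 q] D.base := by
  filter_upwards [Ioo_mem_nhds h.1 h.2] with t ht
  exact D.ext_eq_base ht.1.le ht.2.le

lemma affine_diff (W s : Fin 4 → ℝ) (qa t : ℝ) :
    DifferentiableAt ℝ (fun t => (fun i => W i + (t - qa) * s i : Fin 4 → ℝ)) t := by
  apply differentiableAt_pi.2
  intro i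
  fun_prop

lemma base_diff_interior {q : ℝ} (hq : q ∈ Ioo D.q0 D.q3) (h1 : q ≠ D.q1) (h2 : q ≠ D.q2) :
    DifferentiableAt ℝ D.base q := by
  rcases lt_or_ge q D.q1 with h | h
  · have hee : D.base =ᶠ[𝓝 q] fun t => (fun i => D.V0 i + (t - D.q0) * D.s1 i : Fin 4 → ℝ) := by
      filter_upwards [Ioo_mem_nhds hq.1 h] with t ht
      funext i
      exact D.base_piece1 ht.1.le ht.2.le i
    exact hee.differentiableAt_iff.2 (affine_diff _ _ _ q)
  rcases lt_or_ge q D.q2 with h' | h'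
  · have hq1 : D.q1 < q := lt_of_le_of_ne h (Ne.symm h1)
    have hee : D.base =ᶠ[𝓝 q] fun t => (fun i => D.V1 i + (t - D.q1) * D.s2 i : Fin 4 → ℝ) := by
      filter_upwards [Ioo_mem_nhds hq1 h'] with t ht
      funext i
      exact D.base_piece2 ht.1.le ht.2.le i
    exact hee.differentiableAt_iff.2 (affine_diff _ _ _ q)
  · have hq2 : D.q2 < q := lt_of_le_of_ne h' (Ne.symm h2)
    have hee : D.base =ᶠ[𝓝 q] fun t => (fun i => D.V2 i + (t - D.q2) * D.s3 i : Fin 4 → ℝ) := by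
      filter_upwards [Ioo_mem_nhds hq2 hq.2] with t ht
      funext i
      exact D.base_piece3 ht.1.le ht.2.le i
    exact hee.differentiableAt_iff.2 (affine_diff _ _ _ q)

lemma base_coord_diff {q : ℝ} (i0 : Fin 4) (hd : DifferentiableAt ℝ D.base q) :
    DifferentiableAt ℝ (fun t => D.base t i0) q :=
  (ContinuousLinearMap.proj (R := ℝ) (φ := fun _ : Fin 4 => ℝ) i0).differentiableAt.comp q hd

lemma base_not_diff_q1 (i0 : Fin 4) (hne : D.s1 i0 ≠ D.s2 i0) :
    ¬DifferentiableAt ℝ D.base D.q1 := by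
  intro hdiff
  have hloc : ∀ᶠ t in 𝓝 D.q1, D.base t i0 =
      (D.V0 i0 - D.s1 i0 * D.q0 + (D.s1 i0 - D.s2 i0) / 2 * D.q1) +
      (D.s1 i0 + D.s2 i0) / 2 * t + (D.s2 i0 - D.s1 i0) / 2 * |t - D.q1| := by
    filter_upwards [Ioo_mem_nhds D.h01 D.h12] with t ht
    rcases le_total t D.q1 with h | h
    · rw [D.base_piece1 ht.1.le h i0, abs_of_nonpos (by linarith)]
      ring
    · rw [D.base_piece2 h ht.2.le i0, abs_of_nonneg (by linarith)]
      simp only [V1]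
      ring
  exact not_diff_kink (div_ne_zero (sub_ne_zero.2 (Ne.symm hne)) two_ne_zero) hloc
    (D.base_coord_diff i0 hdiff)

lemma base_not_diff_q2 (i0 : Fin 4) (hne : D.s2 i0 ≠ D.s3 i0) :
    ¬DifferentiableAt ℝ D.base D.q2 := by
  intro hdiff
  have hloc : ∀ᶠ t in 𝓝 D.q2, D.base t i0 =
      (D.V1 i0 - D.s2 i0 * D.q1 + (D.s2 i0 - D.s3 i0) / 2 * D.q2) +
      (D.s2 i0 + D.s3 i0) / 2 * t + (D.s3 i0 - D.s2 i0) / 2 * |t - D.q2| := by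
    filter_upwards [Ioo_mem_nhds D.h12 D.h23] with t ht
    rcases le_total t D.q2 with h | h
    · rw [D.base_piece2 ht.1.le h i0, abs_of_nonpos (by linarith)]
      ring
    · rw [D.base_piece3 h ht.2.le i0, abs_of_nonneg (by linarith)]
      simp only [V2]
      ring
  exact not_diff_kink (div_ne_zero (sub_ne_zero.2 (Ne.symm hne)) two_ne_zero) hloc
    (D.base_coord_diff i0 hdiff)

lemma ext_diff_set (hk1 : ∃ i, D.s1 i ≠ D.s2 i) (hk2 : ∃ i, D.s2 i ≠ D.s3 i) :
    {q ∈ Ioo D.q0 D.q3 | ¬DifferentiableAt ℝ D.Ext q} = {D.q1, D.q2} := by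
  ext q
  simp only [mem_setOf_eq, mem_insert_iff, mem_singleton_iff]
  constructor
  · rintro ⟨hq, hnd⟩
    by_contra hc
    push_neg at hc
    exact hnd ((D.ext_eventuallyEq_base hq).differentiableAt_iff.2
      (D.base_diff_interior hq hc.1 hc.2))
  · rintro (rfl | rfl)
    · have hmem : D.q1 ∈ Ioo D.q0 D.q3 := ⟨D.h01, D.h13⟩
      refine ⟨hmem, fun hd => ?_⟩
      obtain ⟨i0, hi0⟩ := hk1
      exact D.base_not_diff_q1 i0 hi0 ((D.ext_eventuallyEq_base hmem).differentiableAt_iff.1 hd)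
    · have hmem : D.q2 ∈ Ioo D.q0 D.q3 := ⟨D.h02, D.h23⟩
      refine ⟨hmem, fun hd => ?_⟩
      obtain ⟨i0, hi0⟩ := hk2
      exact D.base_not_diff_q2 i0 hi0 ((D.ext_eventuallyEq_base hmem).differentiableAt_iff.1 hd)

end SD
end GS4

namespace GS4

lemma haff (A B : Fin 4 → ℝ) (t : ℝ) :
    HasDerivAt (fun t => (fun i => A i * t + B i : Fin 4 → ℝ)) A t := by
  apply hasDerivAt_pi.2
  intro i
  simpa using ((hasDerivAt_id t).const_mul (A i)).add_const (B i)

lemma locally_affine_deriv_const {f : ℝ → Fin 4 → ℝ} {a b : ℝ} (hab : a < b)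
    (hright : ∀ q ∈ Ico a b, ∃ ε > 0, ∃ A B : Fin 4 → ℝ,
      ∀ t ∈ Icc a b ∩ Icc q (q + ε), ∀ i, f t i = A i * t + B i)
    (hleft : ∀ q ∈ Ioc a b, ∃ ε > 0, ∃ A B : Fin 4 → ℝ,
      ∀ t ∈ Icc a b ∩ Icc (q - ε) q, ∀ i, f t i = A i * t + B i)
    (hdiff : ∀ q ∈ Ioo a b, DifferentiableAt ℝ f q)
    (hcont : ContinuousOn f (Icc a b)) :
    ∀ q ∈ Icc a b, f q = f a + ((q - a) / (b - a)) • (f b - f a) := by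
  have keyA : ∀ q ∈ Ioo a b, ∀ᶠ t in 𝓝 q, deriv f t = deriv f q := by
    intro q hq
    obtain ⟨ε₁, hε₁, A, B, hAB⟩ := hright q ⟨hq.1.le, hq.2⟩
    obtain ⟨ε₂, hε₂, A', B', hAB'⟩ := hleft q ⟨hq.1, hq.2.le⟩
    set εR := min ε₁ (b - q) with hεR
    have hεRpos : 0 < εR := lt_min hε₁ (by linarith [hq.2])
    set εL := min ε₂ (q - a) with hεL
    have hεLpos : 0 < εL := lt_min hε₂ (by linarith [hq.1])
    have hεR1 : εR ≤ ε₁ := min_le_left _ _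
    have hεR2 : εR ≤ b - q := min_le_right _ _
    have hεL1 : εL ≤ ε₂ := min_le_left _ _
    have hεL2 : εL ≤ q - a := min_le_right _ _
    have hfr : ∀ t ∈ Icc q (q + εR), f t = fun i => A i * t + B i := by
      intro t ht
      funext i
      exact hAB t ⟨⟨by linarith [hq.1, ht.1], by linarith [ht.2]⟩,
        ⟨ht.1, by linarith [ht.2]⟩⟩ i
    have hfl : ∀ t ∈ Icc (q - εL) q, f t = fun i => A' i * t + B' i := by
      intro t ht
      funext i
      exact hAB' t ⟨⟨by linarith [ht.1], by linarith [hq.2, ht.2]⟩,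
        ⟨by linarith [ht.1], ht.2⟩⟩ i
    have hdq : HasDerivAt f (deriv f q) q := (hdiff q hq).hasDerivAt
    have hA : A = deriv f q := by
      have h1 : HasDerivWithinAt f A (Icc q (q + εR)) q :=
        ((haff A B q).hasDerivWithinAt).congr (fun t ht => hfr t ht)
          (hfr q ⟨le_rfl, by linarith⟩)
      have h2 : HasDerivWithinAt f (deriv f q) (Icc q (q + εR)) q := hdq.hasDerivWithinAt
      exact ((uniqueDiffOn_Icc (show q < q + εR by linarith)) q
        ⟨le_rfl, by linarith⟩).eq_deriv _ h1 h2
    have hA' : A' = deriv f q := by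
      have h1 : HasDerivWithinAt f A' (Icc (q - εL) q) q :=
        ((haff A' B' q).hasDerivWithinAt).congr (fun t ht => hfl t ht)
          (hfl q ⟨by linarith, le_rfl⟩)
      have h2 : HasDerivWithinAt f (deriv f q) (Icc (q - εL) q) q := hdq.hasDerivWithinAt
      exact ((uniqueDiffOn_Icc (show q - εL < q by linarith)) q
        ⟨by linarith, le_rfl⟩).eq_deriv _ h1 h2
    filter_upwards [Ioo_mem_nhds (show q - εL < q by linarith)
      (show q < q + εR by linarith)] with t ht
    rcases lt_trichotomy t q with h | h | h
    · have hee : f =ᶠ[𝓝 t] fun u => (fun i => A' i * u + B' i : Fin 4 → ℝ) := by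
        filter_upwards [Ioo_mem_nhds ht.1 h] with u hu
        exact hfl u ⟨hu.1.le, hu.2.le⟩
      rw [hee.deriv_eq, (haff A' B' t).deriv, hA']
    · rw [h]
    · have hee : f =ᶠ[𝓝 t] fun u => (fun i => A i * u + B i : Fin 4 → ℝ) := by
        filter_upwards [Ioo_mem_nhds h ht.2] with u hu
        exact hfr u ⟨hu.1.le, hu.2.le⟩
      rw [hee.deriv_eq, (haff A B t).deriv, hA]
  set M := deriv f ((a + b) / 2) with hM
  have hmid : (a + b) / 2 ∈ Ioo a b := ⟨by linarith, by linarith⟩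
  have keyB : ∀ q ∈ Ioo a b, deriv f q = M := by
    by_contra hc
    push_neg at hc
    obtain ⟨q, hq, hne⟩ := hc
    set U : Set ℝ := {t | t ∈ Ioo a b ∧ deriv f t = M} with hU
    set V : Set ℝ := {t | t ∈ Ioo a b ∧ deriv f t ≠ M} with hV
    have hUopen : IsOpen U := by
      rw [isOpen_iff_mem_nhds]
      rintro t ⟨ht1, ht2⟩
      filter_upwards [Ioo_mem_nhds ht1.1 ht1.2, keyA t ht1] with u hu1 hu2
      exact ⟨hu1, hu2.trans ht2⟩
    have hVopen : IsOpen V := by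
      rw [isOpen_iff_mem_nhds]
      rintro t ⟨ht1, ht2⟩
      filter_upwards [Ioo_mem_nhds ht1.1 ht1.2, keyA t ht1] with u hu1 hu2
      exact ⟨hu1, hu2.trans_ne ht2⟩
    obtain ⟨z, hz1, hz2, hz3⟩ := isPreconnected_Ioo (a := a) (b := b) U V hUopen hVopen
      (fun t ht => by
        by_cases h : deriv f t = M
        · exact Or.inl ⟨ht, h⟩
        · exact Or.inr ⟨ht, h⟩)
      ⟨(a + b) / 2, hmid, hmid, rfl⟩ ⟨q, hq, hq, hne⟩
    exact hz3.2 hz2.2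
  have hrderiv : ∀ q ∈ Ico a b, HasDerivWithinAt f M (Ici q) q := by
    intro q hq
    obtain ⟨ε₁, hε₁, A, B, hAB⟩ := hright q hq
    set εR := min ε₁ (b - q) with hεR
    have hεRpos : 0 < εR := lt_min hε₁ (by linarith [hq.2])
    have hεR1 : εR ≤ ε₁ := min_le_left _ _
    have hεR2 : εR ≤ b - q := min_le_right _ _
    have hfr : ∀ t ∈ Icc q (q + εR), f t = fun i => A i * t + B i := by
      intro t ht
      funext i
      exact hAB t ⟨⟨by linarith [hq.1, ht.1], by linarith [ht.2]⟩,
        ⟨ht.1, by linarith [ht.2]⟩⟩ i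
    have hA : A = M := by
      set t₀ := q + εR / 2 with ht₀def
      have ht₀ : t₀ ∈ Ioo a b :=
        ⟨by rw [ht₀def]; linarith [hq.1, hεRpos], by rw [ht₀def]; linarith [hεR2, hεRpos]⟩
      have hee : f =ᶠ[𝓝 t₀] fun u => (fun i => A i * u + B i : Fin 4 → ℝ) := by
        filter_upwards [Ioo_mem_nhds (show q < t₀ by rw [ht₀def]; linarith)
          (show t₀ < q + εR by rw [ht₀def]; linarith)] with u hu
        exact hfr u ⟨hu.1.le, hu.2.le⟩
      rw [← keyB t₀ ht₀, hee.deriv_eq, (haff A B t₀).deriv]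
    have h1 : HasDerivWithinAt f A (Icc q (q + εR)) q :=
      ((haff A B q).hasDerivWithinAt).congr (fun t ht => hfr t ht)
        (hfr q ⟨le_rfl, by linarith⟩)
    rw [hA] at h1
    exact h1.mono_of_mem_nhdsWithin (Icc_mem_nhdsGE_of_mem ⟨le_rfl, by linarith⟩)
  set g : ℝ → Fin 4 → ℝ := fun q => f a + (q - a) • M with hg
  have hgderiv : ∀ q ∈ Ico a b, HasDerivWithinAt g M (Ici q) q := by
    intro q _
    have h1 : HasDerivAt (fun q : ℝ => (q - a) • M) ((1:ℝ) • M) q :=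
      ((hasDerivAt_id q).sub_const a).smul_const M
    have h2 : HasDerivAt g M q := by
      rw [hg]
      simpa using h1.const_add (f a)
    exact h2.hasDerivWithinAt
  have hgcont : ContinuousOn g (Icc a b) := by
    apply Continuous.continuousOn
    exact continuous_const.add ((continuous_id.sub continuous_const).smul continuous_const)
  have heq := eq_of_has_deriv_right_eq (f' := fun _ => M) hrderiv hgderiv hcont hgcont
    (by rw [hg]; simp)
  have h2 := heq b ⟨hab.le, le_rfl⟩
  have hfb : f b - f a = (b - a) • M := by
    rw [h2, hg]
    simp
  intro q hq
  rw [heq q hq, hg]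
  simp only
  rw [hfb, smul_smul, div_mul_cancel₀ _ (ne_of_gt (sub_pos.2 hab))]

namespace SD
variable (D : SD)

lemma eq_ext_of_cond {f : ℝ → Fin 4 → ℝ}
    (hsys : IsGenNSystem 4 (Icc D.q0 D.q3) f)
    (hdiffset : ∀ q ∈ Ioo D.q0 D.q3, q ≠ D.q1 → q ≠ D.q2 → DifferentiableAt ℝ f q)
    (h0 : f D.q0 = D.V0) (h1 : f D.q1 = D.V1) (h2 : f D.q2 = D.V2) (h3 : f D.q3 = D.V3) :
    EqOn f D.Ext (Icc D.q0 D.q3) := by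
  have main : ∀ qa qb : ℝ, qa < qb → Icc qa qb ⊆ Icc D.q0 D.q3 →
      (∀ q ∈ Ioo qa qb, DifferentiableAt ℝ f q) →
      ∀ q ∈ Icc qa qb, f q = f qa + ((q - qa) / (qb - qa)) • (f qb - f qa) := by
    intro qa qb hab hsub hdiff'
    apply locally_affine_deriv_const hab ?_ ?_ hdiff' (hsys.1.mono hsub)
    · intro q hq
      obtain ⟨ε, hε, A, B, C, Dv, hl, hr⟩ := hsys.2.1 q (hsub ⟨hq.1, hq.2.le⟩)
      exact ⟨ε, hε, C, Dv, fun t ht i => hr t ⟨hsub ht.1, ht.2⟩ i⟩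
    · intro q hq
      obtain ⟨ε, hε, A, B, C, Dv, hl, hr⟩ := hsys.2.1 q (hsub ⟨hq.1.le, hq.2⟩)
      exact ⟨ε, hε, A, B, fun t ht i => hl t ⟨hsub ht.1, ht.2⟩ i⟩
  intro q hq
  rw [D.ext_eq_base hq.1 hq.2]
  rcases le_or_gt q D.q1 with h | h
  · have hm := main D.q0 D.q1 D.h01 (Icc_subset_Icc le_rfl D.h13.le)
      (fun t ht => hdiffset t ⟨ht.1, lt_trans ht.2 D.h13⟩ (ne_of_lt ht.2)
        (ne_of_lt (ht.2.trans D.h12))) q ⟨hq.1, h⟩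
    rw [hm, h0, h1]
    funext i
    rw [D.base_piece1 hq.1 h i]
    simp only [Pi.add_apply, Pi.smul_apply, Pi.sub_apply, smul_eq_mul, V1]
    have hne : D.q1 - D.q0 ≠ 0 := ne_of_gt (sub_pos.2 D.h01)
    field_simp
    ring
  rcases le_or_gt q D.q2 with h' | h'
  · have hm := main D.q1 D.q2 D.h12 (Icc_subset_Icc D.h01.le D.h23.le)
      (fun t ht => hdiffset t ⟨D.h01.trans ht.1, lt_trans ht.2 D.h23⟩ (ne_of_gt ht.1)
        (ne_of_lt ht.2)) q ⟨h.le, h'⟩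
    rw [hm, h1, h2]
    funext i
    rw [D.base_piece2 h.le h' i]
    simp only [Pi.add_apply, Pi.smul_apply, Pi.sub_apply, smul_eq_mul, V2]
    have hne : D.q2 - D.q1 ≠ 0 := ne_of_gt (sub_pos.2 D.h12)
    field_simp
    ring
  · have hm := main D.q2 D.q3 D.h23 (Icc_subset_Icc D.h02.le le_rfl)
      (fun t ht => hdiffset t ⟨D.h02.trans ht.1, ht.2⟩ (ne_of_gt (D.h12.trans ht.1))
        (ne_of_gt ht.1)) q ⟨h'.le, hq.2⟩
    rw [hm, h2, h3]
    funext i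
    rw [D.base_piece3 h'.le hq.2 i]
    simp only [Pi.add_apply, Pi.smul_apply, Pi.sub_apply, smul_eq_mul, V3]
    have hne : D.q3 - D.q2 ≠ 0 := ne_of_gt (sub_pos.2 D.h23)
    field_simp
    ring

end SD
end GS4

namespace GS4

lemma sum_ite_le0 (f : Fin 4 → ℝ) : (∑ i : Fin 4, if (i:ℕ) ≤ 0 then f i else 0) = f 0 := by
  simp [Fin.sum_univ_four, show ((0:Fin 4):ℕ) = 0 from rfl, show ((1:Fin 4):ℕ) = 1 from rfl,
    show ((2:Fin 4):ℕ) = 2 from rfl, show ((3:Fin 4):ℕ) = 3 from rfl]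

lemma sum_ite_le1 (f : Fin 4 → ℝ) :
    (∑ i : Fin 4, if (i:ℕ) ≤ 1 then f i else 0) = f 0 + f 1 := by
  simp [Fin.sum_univ_four, show ((0:Fin 4):ℕ) = 0 from rfl, show ((1:Fin 4):ℕ) = 1 from rfl,
    show ((2:Fin 4):ℕ) = 2 from rfl, show ((3:Fin 4):ℕ) = 3 from rfl]

lemma sum_ite_le2 (f : Fin 4 → ℝ) :
    (∑ i : Fin 4, if (i:ℕ) ≤ 2 then f i else 0) = f 0 + f 1 + f 2 := by
  simp [Fin.sum_univ_four, show ((0:Fin 4):ℕ) = 0 from rfl, show ((1:Fin 4):ℕ) = 1 from rfl,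
    show ((2:Fin 4):ℕ) = 2 from rfl, show ((3:Fin 4):ℕ) = 3 from rfl]

lemma ramp_eq_max {a b u : ℝ} (hab : a ≤ b) (h : u ≤ b) : ramp a b u = max (u - a) 0 := by
  rcases le_total u a with h' | h'
  · rw [ramp_of_le hab h', eq_comm, max_eq_right (by linarith)]
  · rw [ramp_of_mem h' h, eq_comm, max_eq_left (by linarith)]

noncomputable def sysR (α : ℝ) (hα : 1 < α) : SD where
  γ := α
  q0 := 3 + α
  q1 := 2 + 2 * α
  q2 := 2 + α + α ^ 2
  q3 := α * (3 + α)
  V0 := ptA1 α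
  s1 := ![0, 0, 1, 0]
  s2 := ![0, 0, 0, 1]
  s3 := ![1/2, 1/2, 0, 0]
  hγ := hα
  hq0 := by linarith
  h01 := by linarith
  h12 := by nlinarith
  h23 := by nlinarith
  hq3 := by ring
  hs1 := by intro i; fin_cases i <;> norm_num
  hs2 := by intro i; fin_cases i <;> norm_num
  hs3 := by intro i; fin_cases i <;> norm_num
  hsum1 := by norm_num [Matrix.cons_val_two, Matrix.cons_val_three]
  hsum2 := by norm_num [Matrix.cons_val_two, Matrix.cons_val_three]
  hsum3 := by norm_num [Matrix.cons_val_two, Matrix.cons_val_three]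
  hV0sum := by simp [ptA1]; ring
  hV0pos := by simp [ptA1]
  hm0 := by
    refine mono4 ?_ ?_ ?_ <;> simp [ptA1] <;> linarith
  hm1 := by
    refine mono4 ?_ ?_ ?_ <;> simp [ptA1] <;> nlinarith
  hm2 := by
    refine mono4 ?_ ?_ ?_ <;> simp [ptA1] <;> nlinarith
  hsim := by
    intro i
    fin_cases i <;> simp [ptA1] <;> ring

variable (α : ℝ) (hα : 1 < α)

lemma sysR_V1 : (sysR α hα).V1 = ptA2 α := by
  funext i
  fin_cases i <;> simp [SD.V1, sysR, ptA1, ptA2] <;> ring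

lemma sysR_V2 : (sysR α hα).V2 = ptA3 α := by
  funext i
  fin_cases i <;> simp [SD.V2, SD.V1, sysR, ptA1, ptA3] <;> ring

lemma sysR_V3 : (sysR α hα).V3 = α • ptA1 α := by
  funext i
  rw [(sysR α hα).V3_eq i]
  simp [sysR]

lemma sysR_base01 (u : ℝ) : (sysR α hα).base u 0 = (sysR α hα).base u 1 := by
  simp [SD.base, sysR, ptA1]

lemma sysR_ext01 (q : ℝ) : (sysR α hα).Ext q 0 = (sysR α hα).Ext q 1 := by
  simp only [SD.Ext, Pi.smul_apply, smul_eq_mul]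
  rw [sysR_base01]

lemma sysR_G3 : ∀ (j : ℕ) (hj : j + 1 < 4) (H : Set ℝ), H ⊆ Ici (sysR α hα).q0 →
    H.OrdConnected →
    (∀ q ∈ H, (sysR α hα).Ext q ⟨j, Nat.lt_of_succ_lt hj⟩ < (sysR α hα).Ext q ⟨j+1, hj⟩) →
    SlopeZeroOneOn H fun q => ∑ i : Fin 4, if (i:ℕ) ≤ j then (sysR α hα).Ext q i else 0 := by
  intro j hj H hH hoc hstrict
  set D := sysR α hα with hD
  have hj' : j ≤ 2 := by omega
  interval_cases j
  · exact ⟨0, 0, fun t ht =>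
      absurd (hstrict t ht) (not_lt.2 (le_of_eq (sysR_ext01 α hα t).symm))⟩
  · apply D.g3_case 1 (by omega) D.q0 D.q2 2 le_rfl D.h03 ?_ ?_ ?_ H hH hoc hstrict
    · rw [D.base_q0]
      show (ptA1 α) 1 = (ptA1 α) 2
      simp [ptA1]
    · intro u hu
      rw [sum_ite_le1]
      have h01 : D.base u 0 + D.base u 1 = 2 + ramp D.q2 D.q3 u := by
        simp [SD.base, hD, sysR, ptA1]
        ring
      rw [h01, ramp_eq_max D.h23.le hu.2]
    · intro u hu
      have hu' : u = D.q0 := le_antisymm hu.2 hu.1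
      subst hu'
      rw [sum_ite_le1, D.base_q0]
      have hmax : max (D.γ * D.q0 - D.q2) 0 = D.γ * D.q0 - D.q2 := by
        apply max_eq_left
        show (0:ℝ) ≤ α * (3 + α) - (2 + α + α ^ 2)
        nlinarith
      rw [hmax]
      show α * ((ptA1 α) 0 + (ptA1 α) 1) = 2 + (α * (3 + α) - (2 + α + α ^ 2))
      simp [ptA1]
      ring
  · apply D.g3_case 2 (by omega) D.q1 D.q2 (2 + α) D.h01.le D.h13 ?_ ?_ ?_ H hH hoc hstrict
    · rw [D.base_q1, sysR_V1]
      show (ptA2 α) 2 = (ptA2 α) 3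
      simp [ptA2]
    · intro u hu
      rw [sum_ite_le2]
      rcases le_total u D.q2 with h | h
      · rw [D.base_piece2 hu.1 h 0, D.base_piece2 hu.1 h 1, D.base_piece2 hu.1 h 2,
          sysR_V1, max_eq_right (by linarith)]
        show (ptA2 α) 0 + (u - D.q1) * _ + ((ptA2 α) 1 + (u - D.q1) * _) +
          ((ptA2 α) 2 + (u - D.q1) * _) = 2 + α + 0
        simp [ptA2, hD, sysR]
        ring
      · rw [D.base_piece3 h hu.2 0, D.base_piece3 h hu.2 1, D.base_piece3 h hu.2 2,
          sysR_V2, max_eq_left (by linarith)]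
        show (ptA3 α) 0 + (u - D.q2) * _ + ((ptA3 α) 1 + (u - D.q2) * _) +
          ((ptA3 α) 2 + (u - D.q2) * _) = 2 + α + (u - D.q2)
        simp [ptA3, hD, sysR]
        ring
    · intro u hu
      rw [sum_ite_le2, D.base_piece1 hu.1 hu.2 0, D.base_piece1 hu.1 hu.2 1,
        D.base_piece1 hu.1 hu.2 2]
      have hq2 : D.q2 ≤ D.γ * u := by
        show (2 + α + α ^ 2 : ℝ) ≤ α * u
        have h1 : (3 + α : ℝ) ≤ u := hu.1
        nlinarith
      rw [max_eq_left (by linarith)]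
      show D.γ * ((ptA1 α) 0 + (u - D.q0) * _ + ((ptA1 α) 1 + (u - D.q0) * _) +
        ((ptA1 α) 2 + (u - D.q0) * _)) = 2 + α + (D.γ * u - D.q2)
      simp [ptA1, hD, sysR]
      ring

end GS4

namespace GS4

lemma smul_mem_stdDelta {c : ℝ} (hc : 0 < c) {w : Fin 4 → ℝ} (h0 : 0 ≤ w 0)
    (h01 : w 0 ≤ w 1) (h12 : w 1 ≤ w 2) (h23 : w 2 ≤ w 3)
    (hsum : w 0 + w 1 + w 2 + w 3 = c) : c⁻¹ • w ∈ stdDelta := by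
  have hcinv : (0:ℝ) ≤ c⁻¹ := inv_nonneg.2 hc.le
  refine ⟨mul_nonneg hcinv h0, mul_le_mul_of_nonneg_left h01 hcinv,
    mul_le_mul_of_nonneg_left h12 hcinv, mul_le_mul_of_nonneg_left h23 hcinv, ?_⟩
  show c⁻¹ * w 0 + c⁻¹ * w 1 + c⁻¹ * w 2 + c⁻¹ * w 3 = 1
  field_simp
  linarith [hsum]

lemma convex_face01 : Convex ℝ {x : Fin 4 → ℝ | x ∈ stdDelta ∧ x 0 = x 1} := by
  intro x hx y hy a b ha hb hab
  obtain ⟨⟨hx1, hx2, hx3, hx4, hx5⟩, hx6⟩ := hx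
  obtain ⟨⟨hy1, hy2, hy3, hy4, hy5⟩, hy6⟩ := hy
  have he : ∀ k : Fin 4, (a • x + b • y) k = a * x k + b * y k := fun k => rfl
  refine ⟨⟨?_, ?_, ?_, ?_, ?_⟩, ?_⟩ <;> simp only [he]
  · nlinarith [mul_nonneg ha hx1, mul_nonneg hb hy1]
  · nlinarith [mul_le_mul_of_nonneg_left hx2 ha, mul_le_mul_of_nonneg_left hy2 hb]
  · nlinarith [mul_le_mul_of_nonneg_left hx3 ha, mul_le_mul_of_nonneg_left hy3 hb]
  · nlinarith [mul_le_mul_of_nonneg_left hx4 ha, mul_le_mul_of_nonneg_left hy4 hb]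
  · linear_combination a * hx5 + b * hy5 + hab
  · linear_combination a * hx6 + b * hy6

lemma convex_face23 : Convex ℝ {x : Fin 4 → ℝ | x ∈ stdDelta ∧ x 2 = x 3} := by
  intro x hx y hy a b ha hb hab
  obtain ⟨⟨hx1, hx2, hx3, hx4, hx5⟩, hx6⟩ := hx
  obtain ⟨⟨hy1, hy2, hy3, hy4, hy5⟩, hy6⟩ := hy
  have he : ∀ k : Fin 4, (a • x + b • y) k = a * x k + b * y k := fun k => rfl
  refine ⟨⟨?_, ?_, ?_, ?_, ?_⟩, ?_⟩ <;> simp only [he]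
  · nlinarith [mul_nonneg ha hx1, mul_nonneg hb hy1]
  · nlinarith [mul_le_mul_of_nonneg_left hx2 ha, mul_le_mul_of_nonneg_left hy2 hb]
  · nlinarith [mul_le_mul_of_nonneg_left hx3 ha, mul_le_mul_of_nonneg_left hy3 hb]
  · nlinarith [mul_le_mul_of_nonneg_left hx4 ha, mul_le_mul_of_nonneg_left hy4 hb]
  · linear_combination a * hx5 + b * hy5 + hab
  · linear_combination a * hx6 + b * hy6

variable (α : ℝ) (hα : 1 < α)

lemma sysR_kinks1 : ∃ i, (sysR α hα).s1 i ≠ (sysR α hα).s2 i :=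
  ⟨2, by norm_num [sysR, Matrix.cons_val_two, Matrix.cons_val_three]⟩

lemma sysR_kinks2 : ∃ i, (sysR α hα).s2 i ≠ (sysR α hα).s3 i :=
  ⟨3, by norm_num [sysR, Matrix.cons_val_two, Matrix.cons_val_three]⟩

lemma sysR_RCond : RCond α ((sysR α hα).Ext) := by
  set D := sysR α hα with hD
  refine ⟨?_, ?_, ?_, ?_, ?_, ?_, ?_⟩
  · exact IsGenNSystem.mono (D.isGenNSystem_ext (sysR_G3 α hα)) Icc_subset_Ici_self
  · intro q _
    exact sysR_ext01 α hα q
  · exact D.ext_diff_set (sysR_kinks1 α hα) (sysR_kinks2 α hα)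
  · exact (D.ext_eq_base le_rfl D.h03.le).trans D.base_q0
  · exact (D.ext_eq_base D.h01.le D.h13.le).trans (D.base_q1.trans (sysR_V1 α hα))
  · exact (D.ext_eq_base D.h02.le D.h23.le).trans (D.base_q2.trans (sysR_V2 α hα))
  · exact (D.ext_eq_base D.h03.le le_rfl).trans (D.base_q3.trans (sysR_V3 α hα))

lemma RCond_eq_ext {R : ℝ → Fin 4 → ℝ} (h : RCond α R) :
    EqOn R ((sysR α hα).Ext) (Icc (3 + α) (α * (3 + α))) := by
  set D := sysR α hα with hD
  apply D.eq_ext_of_cond h.1 ?_ h.2.2.2.1 (h.2.2.2.2.1.trans (sysR_V1 α hα).symm)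
    (h.2.2.2.2.2.1.trans (sysR_V2 α hα).symm) (h.2.2.2.2.2.2.trans (sysR_V3 α hα).symm)
  intro q hq h1 h2
  by_contra hnd
  have hmem : q ∈ {q ∈ Ioo (3 + α) (α * (3 + α)) | ¬DifferentiableAt ℝ R q} := ⟨hq, hnd⟩
  rw [h.2.2.1] at hmem
  simp only [mem_insert_iff, mem_singleton_iff] at hmem
  rcases hmem with h' | h'
  · exact h1 h'
  · exact h2 h'

end GS4

namespace GS4

lemma partA (α : ℝ) (hα : 1 < α) :
    (∃ R : ℝ → Fin 4 → ℝ, RCond α R) ∧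
    (∀ R R' : ℝ → Fin 4 → ℝ, RCond α R → RCond α R' →
       EqOn R R' (Icc (3 + α) (α * (3 + α)))) ∧
    (∀ R : ℝ → Fin 4 → ℝ, RCond α R →
      ∃ Re : ℝ → Fin 4 → ℝ, IsGenNSystem 4 (Ici (3 + α)) Re ∧
        EqOn Re R (Icc (3 + α) (α * (3 + α))) ∧
        (∀ q, 3 + α ≤ q → Re (α * q) = α • Re q) ∧ IsProper 4 Re ∧
        (∀ Re' : ℝ → Fin 4 → ℝ, IsGenNSystem 4 (Ici (3 + α)) Re' →
           EqOn Re' R (Icc (3 + α) (α * (3 + α))) →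
           (∀ q, 3 + α ≤ q → Re' (α * q) = α • Re' q) →
           EqOn Re Re' (Ici (3 + α))) ∧
        Kset 4 Re = convexHull ℝ {nA1 α, nA2 α, nA3 α} ∧
        Kset 4 Re ⊆ {x ∈ stdDelta | x 0 = x 1}) := by
  set D := sysR α hα with hD
  have hKeq : Kset 4 D.Ext = convexHull ℝ {nA1 α, nA2 α, nA3 α} := by
    rw [D.kset_ext]
    congr 1
    show ({D.q0⁻¹ • D.V0, D.q1⁻¹ • D.V1, D.q2⁻¹ • D.V2} : Set (Fin 4 → ℝ)) = _
    rw [show D.V1 = ptA2 α from sysR_V1 α hα, show D.V2 = ptA3 α from sysR_V2 α hα]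
    rfl
  refine ⟨⟨D.Ext, sysR_RCond α hα⟩, ?_, ?_⟩
  · intro R R' h h'
    exact fun q hq => (RCond_eq_ext α hα h hq).trans (RCond_eq_ext α hα h' hq).symm
  · intro R hR
    refine ⟨D.Ext, D.isGenNSystem_ext (sysR_G3 α hα),
      fun q hq => (RCond_eq_ext α hα hR hq).symm,
      fun q hq => D.ext_selfsim hq, fun i => D.ext_proper i, ?_, hKeq, ?_⟩
    · intro Re' hsys' heq' hsim'
      apply D.ext_unique
      · intro q hq
        exact (heq' hq).trans (RCond_eq_ext α hα hR hq)
      · exact hsim'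
    · rw [hKeq]
      apply convexHull_min ?_ convex_face01
      intro p hp
      simp only [mem_insert_iff, mem_singleton_iff] at hp
      have h1α : (1:ℝ) ≤ α := hα.le
      rcases hp with rfl | rfl | rfl
      · refine ⟨smul_mem_stdDelta (by linarith) ?_ ?_ ?_ ?_ ?_, ?_⟩ <;>
          norm_num [ptA1, nA1, Matrix.cons_val_two, Matrix.cons_val_three] <;> linarith
      · refine ⟨smul_mem_stdDelta (by linarith) ?_ ?_ ?_ ?_ ?_, ?_⟩ <;>
          norm_num [ptA2, nA2, Matrix.cons_val_two, Matrix.cons_val_three] <;> linarith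
      · refine ⟨smul_mem_stdDelta (by nlinarith) ?_ ?_ ?_ ?_ ?_, ?_⟩ <;>
          norm_num [ptA3, nA3, Matrix.cons_val_two, Matrix.cons_val_three] <;> nlinarith

end GS4

namespace GS4

noncomputable def sysS (β : ℝ) (hβ : 1 < β) : SD where
  γ := β
  q0 := 1 + 3 * β
  q1 := 1 + β + 2 * β ^ 2
  q2 := 2 * β + 2 * β ^ 2
  q3 := β * (1 + 3 * β)
  V0 := ptB1 β
  s1 := ![0, 0, 1/2, 1/2]
  s2 := ![1, 0, 0, 0]
  s3 := ![0, 1, 0, 0]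
  hγ := hβ
  hq0 := by linarith
  h01 := by nlinarith
  h12 := by linarith
  h23 := by nlinarith
  hq3 := by ring
  hs1 := by intro i; fin_cases i <;> norm_num
  hs2 := by intro i; fin_cases i <;> norm_num
  hs3 := by intro i; fin_cases i <;> norm_num
  hsum1 := by norm_num [Matrix.cons_val_two, Matrix.cons_val_three]
  hsum2 := by norm_num [Matrix.cons_val_two, Matrix.cons_val_three]
  hsum3 := by norm_num [Matrix.cons_val_two, Matrix.cons_val_three]
  hV0sum := by simp [ptB1]; ring
  hV0pos := by simp [ptB1]
  hm0 := by
    refine mono4 ?_ ?_ ?_ <;> simp [ptB1] <;> linarith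
  hm1 := by
    refine mono4 ?_ ?_ ?_ <;> simp [ptB1] <;> nlinarith
  hm2 := by
    refine mono4 ?_ ?_ ?_ <;> simp [ptB1] <;> nlinarith
  hsim := by
    intro i
    fin_cases i <;> simp [ptB1] <;> ring

variable (β : ℝ) (hβ : 1 < β)

lemma sysS_V1 : (sysS β hβ).V1 = ptB2 β := by
  funext i
  fin_cases i <;> simp [SD.V1, sysS, ptB1, ptB2] <;> ring

lemma sysS_V2 : (sysS β hβ).V2 = ptB3 β := by
  funext i
  fin_cases i <;> simp [SD.V2, SD.V1, sysS, ptB1, ptB3] <;> ring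

lemma sysS_V3 : (sysS β hβ).V3 = β • ptB1 β := by
  funext i
  rw [(sysS β hβ).V3_eq i]
  simp [sysS]

lemma sysS_base23 (u : ℝ) : (sysS β hβ).base u 2 = (sysS β hβ).base u 3 := by
  simp [SD.base, sysS, ptB1]

lemma sysS_ext23 (q : ℝ) : (sysS β hβ).Ext q 2 = (sysS β hβ).Ext q 3 := by
  simp only [SD.Ext, Pi.smul_apply, smul_eq_mul]
  rw [sysS_base23]

lemma sysS_kinks1 : ∃ i, (sysS β hβ).s1 i ≠ (sysS β hβ).s2 i :=
  ⟨0, by norm_num [sysS]⟩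

lemma sysS_kinks2 : ∃ i, (sysS β hβ).s2 i ≠ (sysS β hβ).s3 i :=
  ⟨0, by norm_num [sysS]⟩

lemma sysS_G3 : ∀ (j : ℕ) (hj : j + 1 < 4) (H : Set ℝ), H ⊆ Ici (sysS β hβ).q0 →
    H.OrdConnected →
    (∀ q ∈ H, (sysS β hβ).Ext q ⟨j, Nat.lt_of_succ_lt hj⟩ < (sysS β hβ).Ext q ⟨j+1, hj⟩) →
    SlopeZeroOneOn H fun q => ∑ i : Fin 4, if (i:ℕ) ≤ j then (sysS β hβ).Ext q i else 0 := by
  intro j hj H hH hoc hstrict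
  set D := sysS β hβ with hD
  have hβ0 : (0:ℝ) < β := by linarith
  have hj' : j ≤ 2 := by omega
  interval_cases j
  · apply D.g3_case 0 (by omega) D.q2 (β * D.q1) β D.h02.le D.h23 ?_ ?_ ?_ H hH hoc hstrict
    · rw [D.base_q2, sysS_V2]
      show (ptB3 β) 0 = (ptB3 β) 1
      simp [ptB3]
    · intro u hu
      rw [sum_ite_le0, D.base_piece3 hu.1 hu.2 0, sysS_V2]
      have hmax : max (u - β * D.q1) 0 = 0 := by
        apply max_eq_right
        show u - β * (1 + β + 2 * β ^ 2) ≤ 0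
        have h2 : u ≤ β * (1 + 3 * β) := hu.2
        nlinarith
      rw [hmax]
      show (ptB3 β) 0 + (u - D.q2) * _ = β + 0
      simp [ptB3, hD, sysS]
    · intro u hu
      rw [sum_ite_le0]
      rcases le_total u D.q1 with h | h
      · rw [D.base_piece1 hu.1 h 0]
        have hmax : max (D.γ * u - β * D.q1) 0 = 0 := by
          apply max_eq_right
          show D.γ * u - β * D.q1 ≤ 0
          have h1 : u ≤ D.q1 := h
          show β * u - β * D.q1 ≤ 0
          nlinarith [h1]
        rw [hmax]
        show β * ((ptB1 β) 0 + (u - D.q0) * _) = β + 0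
        simp [ptB1, hD, sysS]
      · rw [D.base_piece2 h hu.2 0, sysS_V1]
        have hmax : max (D.γ * u - β * D.q1) 0 = D.γ * u - β * D.q1 := by
          apply max_eq_left
          have h1 : D.q1 ≤ u := h
          show (0:ℝ) ≤ β * u - β * D.q1
          nlinarith [h1]
        rw [hmax]
        show β * ((ptB2 β) 0 + (u - D.q1) * _) = β + (β * u - β * D.q1)
        simp [ptB2, hD, sysS]
        ring
  · apply D.g3_case 1 (by omega) D.q0 D.q1 (1 + β) le_rfl D.h03 ?_ ?_ ?_ H hH hoc hstrict
    · rw [D.base_q0]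
      show (ptB1 β) 1 = (ptB1 β) 2
      simp [ptB1]
    · intro u hu
      rw [sum_ite_le1]
      rcases le_total u D.q1 with h | h
      · rw [D.base_piece1 hu.1 h 0, D.base_piece1 hu.1 h 1, max_eq_right (by linarith)]
        show (ptB1 β) 0 + (u - D.q0) * _ + ((ptB1 β) 1 + (u - D.q0) * _) = 1 + β + 0
        simp [ptB1, hD, sysS]
      rcases le_total u D.q2 with h' | h'
      · rw [D.base_piece2 h h' 0, D.base_piece2 h h' 1, sysS_V1, max_eq_left (by linarith)]
        show (ptB2 β) 0 + (u - D.q1) * _ + ((ptB2 β) 1 + (u - D.q1) * _) = 1 + β + (u - D.q1)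
        simp [ptB2, hD, sysS]
        ring
      · rw [D.base_piece3 h' hu.2 0, D.base_piece3 h' hu.2 1, sysS_V2,
          max_eq_left (by linarith [D.h12])]
        show (ptB3 β) 0 + (u - D.q2) * _ + ((ptB3 β) 1 + (u - D.q2) * _) = 1 + β + (u - D.q1)
        simp [ptB3, hD, sysS]
        ring
    · intro u hu
      have hu' : u = D.q0 := le_antisymm hu.2 hu.1
      subst hu'
      rw [sum_ite_le1, D.base_q0]
      have hmax : max (D.γ * D.q0 - D.q1) 0 = D.γ * D.q0 - D.q1 := by
        apply max_eq_left
        show (0:ℝ) ≤ β * (1 + 3 * β) - (1 + β + 2 * β ^ 2)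
        nlinarith
      rw [hmax]
      show β * ((ptB1 β) 0 + (ptB1 β) 1) = 1 + β + (β * (1 + 3 * β) - (1 + β + 2 * β ^ 2))
      simp [ptB1]
      ring
  · exact ⟨0, 0, fun t ht =>
      absurd (hstrict t ht) (not_lt.2 (le_of_eq (sysS_ext23 β hβ t).symm))⟩

lemma sysS_SCond : SCond β ((sysS β hβ).Ext) := by
  set D := sysS β hβ with hD
  refine ⟨?_, ?_, ?_, ?_, ?_, ?_, ?_⟩
  · exact IsGenNSystem.mono (D.isGenNSystem_ext (sysS_G3 β hβ)) Icc_subset_Ici_self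
  · intro q _
    exact sysS_ext23 β hβ q
  · exact D.ext_diff_set (sysS_kinks1 β hβ) (sysS_kinks2 β hβ)
  · exact (D.ext_eq_base le_rfl D.h03.le).trans D.base_q0
  · exact (D.ext_eq_base D.h01.le D.h13.le).trans (D.base_q1.trans (sysS_V1 β hβ))
  · exact (D.ext_eq_base D.h02.le D.h23.le).trans (D.base_q2.trans (sysS_V2 β hβ))
  · exact (D.ext_eq_base D.h03.le le_rfl).trans (D.base_q3.trans (sysS_V3 β hβ))

lemma SCond_eq_ext {S : ℝ → Fin 4 → ℝ} (h : SCond β S) :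
    EqOn S ((sysS β hβ).Ext) (Icc (1 + 3 * β) (β * (1 + 3 * β))) := by
  set D := sysS β hβ with hD
  apply D.eq_ext_of_cond h.1 ?_ h.2.2.2.1 (h.2.2.2.2.1.trans (sysS_V1 β hβ).symm)
    (h.2.2.2.2.2.1.trans (sysS_V2 β hβ).symm) (h.2.2.2.2.2.2.trans (sysS_V3 β hβ).symm)
  intro q hq h1 h2
  by_contra hnd
  have hmem : q ∈ {q ∈ Ioo (1 + 3 * β) (β * (1 + 3 * β)) | ¬DifferentiableAt ℝ S q} := ⟨hq, hnd⟩
  rw [h.2.2.1] at hmem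
  simp only [mem_insert_iff, mem_singleton_iff] at hmem
  rcases hmem with h' | h'
  · exact h1 h'
  · exact h2 h'

lemma partB (β : ℝ) (hβ : 1 < β) :
    (∃ S : ℝ → Fin 4 → ℝ, SCond β S) ∧
    (∀ S S' : ℝ → Fin 4 → ℝ, SCond β S → SCond β S' →
       EqOn S S' (Icc (1 + 3 * β) (β * (1 + 3 * β)))) ∧
    (∀ S : ℝ → Fin 4 → ℝ, SCond β S →
      ∃ Se : ℝ → Fin 4 → ℝ, IsGenNSystem 4 (Ici (1 + 3 * β)) Se ∧
        EqOn Se S (Icc (1 + 3 * β) (β * (1 + 3 * β))) ∧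
        (∀ q, 1 + 3 * β ≤ q → Se (β * q) = β • Se q) ∧ IsProper 4 Se ∧
        (∀ Se' : ℝ → Fin 4 → ℝ, IsGenNSystem 4 (Ici (1 + 3 * β)) Se' →
           EqOn Se' S (Icc (1 + 3 * β) (β * (1 + 3 * β))) →
           (∀ q, 1 + 3 * β ≤ q → Se' (β * q) = β • Se' q) →
           EqOn Se Se' (Ici (1 + 3 * β))) ∧
        Kset 4 Se = convexHull ℝ {nB1 β, nB2 β, nB3 β} ∧
        Kset 4 Se ⊆ {x ∈ stdDelta | x 2 = x 3}) := by
  set D := sysS β hβ with hD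
  have hKeq : Kset 4 D.Ext = convexHull ℝ {nB1 β, nB2 β, nB3 β} := by
    rw [D.kset_ext]
    congr 1
    show ({D.q0⁻¹ • D.V0, D.q1⁻¹ • D.V1, D.q2⁻¹ • D.V2} : Set (Fin 4 → ℝ)) = _
    rw [show D.V1 = ptB2 β from sysS_V1 β hβ, show D.V2 = ptB3 β from sysS_V2 β hβ]
    rfl
  refine ⟨⟨D.Ext, sysS_SCond β hβ⟩, ?_, ?_⟩
  · intro S S' h h'
    exact fun q hq => (SCond_eq_ext β hβ h hq).trans (SCond_eq_ext β hβ h' hq).symm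
  · intro S hS
    refine ⟨D.Ext, D.isGenNSystem_ext (sysS_G3 β hβ),
      fun q hq => (SCond_eq_ext β hβ hS hq).symm,
      fun q hq => D.ext_selfsim hq, fun i => D.ext_proper i, ?_, hKeq, ?_⟩
    · intro Se' hsys' heq' hsim'
      apply D.ext_unique
      · intro q hq
        exact (heq' hq).trans (SCond_eq_ext β hβ hS hq)
      · exact hsim'
    · rw [hKeq]
      apply convexHull_min ?_ convex_face23
      intro p hp
      simp only [mem_insert_iff, mem_singleton_iff] at hp
      have h1β : (1:ℝ) ≤ β := hβ.le
      rcases hp with rfl | rfl | rfl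
      · refine ⟨smul_mem_stdDelta (by linarith) ?_ ?_ ?_ ?_ ?_, ?_⟩ <;>
          norm_num [ptB1, nB1, Matrix.cons_val_two, Matrix.cons_val_three] <;> linarith
      · refine ⟨smul_mem_stdDelta (by nlinarith) ?_ ?_ ?_ ?_ ?_, ?_⟩ <;>
          norm_num [ptB2, nB2, Matrix.cons_val_two, Matrix.cons_val_three] <;> nlinarith
      · refine ⟨smul_mem_stdDelta (by nlinarith) ?_ ?_ ?_ ?_ ?_, ?_⟩ <;>
          norm_num [ptB3, nB3, Matrix.cons_val_two, Matrix.cons_val_three] <;> nlinarith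

end GS4


theorem stmt_12 (α β : ℝ) (hα : 1 < α) (hαβ : α < β) :
    -- (a) existence and uniqueness of R on [3+α, α(3+α)]
    ((∃ R : ℝ → Fin 4 → ℝ, RCond α R) ∧
     (∀ R R' : ℝ → Fin 4 → ℝ, RCond α R → RCond α R' →
        EqOn R R' (Icc (3 + α) (α * (3 + α)))) ∧
     -- unique self-similar proper extension to [3+α, ∞), with its K
     (∀ R : ℝ → Fin 4 → ℝ, RCond α R →
       ∃ Re : ℝ → Fin 4 → ℝ, IsGenNSystem 4 (Ici (3 + α)) Re ∧
         EqOn Re R (Icc (3 + α) (α * (3 + α))) ∧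
         (∀ q, 3 + α ≤ q → Re (α * q) = α • Re q) ∧ IsProper 4 Re ∧
         (∀ Re' : ℝ → Fin 4 → ℝ, IsGenNSystem 4 (Ici (3 + α)) Re' →
            EqOn Re' R (Icc (3 + α) (α * (3 + α))) →
            (∀ q, 3 + α ≤ q → Re' (α * q) = α • Re' q) →
            EqOn Re Re' (Ici (3 + α))) ∧
         Kset 4 Re = convexHull ℝ {nA1 α, nA2 α, nA3 α} ∧
         Kset 4 Re ⊆ {x ∈ stdDelta | x 0 = x 1})) ∧
    -- (b) same for S
    ((∃ S : ℝ → Fin 4 → ℝ, SCond β S) ∧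
     (∀ S S' : ℝ → Fin 4 → ℝ, SCond β S → SCond β S' →
        EqOn S S' (Icc (1 + 3 * β) (β * (1 + 3 * β)))) ∧
     (∀ S : ℝ → Fin 4 → ℝ, SCond β S →
       ∃ Se : ℝ → Fin 4 → ℝ, IsGenNSystem 4 (Ici (1 + 3 * β)) Se ∧
         EqOn Se S (Icc (1 + 3 * β) (β * (1 + 3 * β))) ∧
         (∀ q, 1 + 3 * β ≤ q → Se (β * q) = β • Se q) ∧ IsProper 4 Se ∧
         (∀ Se' : ℝ → Fin 4 → ℝ, IsGenNSystem 4 (Ici (1 + 3 * β)) Se' →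
            EqOn Se' S (Icc (1 + 3 * β) (β * (1 + 3 * β))) →
            (∀ q, 1 + 3 * β ≤ q → Se' (β * q) = β • Se' q) →
            EqOn Se Se' (Ici (1 + 3 * β))) ∧
         Kset 4 Se = convexHull ℝ {nB1 β, nB2 β, nB3 β} ∧
         Kset 4 Se ⊆ {x ∈ stdDelta | x 2 = x 3})) := by
  exact ⟨GS4.partA α hα, GS4.partB β (hα.trans hαβ)⟩
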